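/- arXiv:1310.2168 — 6 statements merged into one kernel-verified Lean document; each statement's English description precedes it below -/
import Mathlib

section
/- Let n ≥ 2 and let ζ ∈ ℂ be a primitive n-th root of unity. Then there exist a, b ∈ SU(n) with a b a⁻¹ b⁻¹ = ζ·I and such that the centralizer of {a,b} in SU(n) equals the center of SU(n), i.e. every g ∈ SU(n) commuting with both a and b is of the form ω·I with ωⁿ = 1. -/
/-!
Take the clock and shift matrices `D = diag(1, ζ, …, ζⁿ⁻¹)` and `P` (the permutation matrix of the
`n`-cycle `i ↦ i + 1`), which satisfy `P D = ζ D P`. Rescaling each by an `n`-th root of its inverse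
determinant puts them in `SU(n)` without changing the commutator. A matrix commuting with `D` is
diagonal, since the `ζ^i` are pairwise distinct, and a diagonal matrix commuting with `P` has
entries invariant under the `n`-cycle, so it is a scalar `ω • 1`, whose determinant is `ωⁿ`.
-/

open Matrix

theorem Unitary.coe_commutator_eq_smul_one {R A : Type*} [Monoid A] [StarMul A] [SMul R A]
    [IsScalarTower R A A] {a b : unitary A} {c : R} (h : (a : A) * b = c • ((b : A) * a)) :
    ((a * b * a⁻¹ * b⁻¹ : unitary A) : A) = c • 1 := by
  rw [← Unitary.star_eq_inv, ← Unitary.star_eq_inv]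
  simp only [Submonoid.coe_mul, Unitary.coe_star]
  rw [h, smul_mul_assoc, smul_mul_assoc, mul_assoc (b : A), Unitary.mul_star_self_of_mem a.2,
    mul_one, Unitary.mul_star_self_of_mem b.2]

theorem Complex.mem_unitary_iff_norm_eq_one {z : ℂ} : z ∈ unitary ℂ ↔ ‖z‖ = 1 := by
  refine ⟨CStarRing.norm_of_mem_unitary, fun h => ?_⟩
  rw [Unitary.mem_iff_star_mul_self, Complex.star_def, Complex.conj_mul', h]
  norm_num

theorem Matrix.exists_smul_mem_specialUnitaryGroup {ι : Type*} [Fintype ι] [DecidableEq ι]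
    [Nonempty ι] {U : Matrix ι ι ℂ} (hU : U ∈ unitaryGroup ι ℂ) :
    ∃ c : ℂ, c ≠ 0 ∧ c • U ∈ specialUnitaryGroup ι ℂ := by
  have hcard : Fintype.card ι ≠ 0 := Fintype.card_ne_zero
  have hdet : ‖U.det‖ = 1 := CStarRing.norm_of_mem_unitary (det_of_mem_unitary hU)
  obtain ⟨c, hc⟩ := IsAlgClosed.exists_pow_nat_eq U.det⁻¹ (Nat.pos_of_ne_zero hcard)
  have hc1 : ‖c‖ = 1 := (pow_eq_one_iff_of_nonneg (norm_nonneg c) hcard).1 <| by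
    rw [← norm_pow, hc, norm_inv, hdet, inv_one]
  refine ⟨c, norm_ne_zero_iff.1 (hc1 ▸ one_ne_zero), mem_specialUnitaryGroup_iff.2
    ⟨Unitary.smul_mem_of_mem (Complex.mem_unitary_iff_norm_eq_one.2 hc1) hU, ?_⟩⟩
  rw [det_smul, hc, inv_mul_cancel₀ (norm_ne_zero_iff.1 (hdet ▸ one_ne_zero))]

section UnitaryGroup

variable {ι R : Type*} [Fintype ι] [DecidableEq ι] [CommRing R] [StarRing R]

theorem Matrix.diagonal_mem_unitaryGroup {d : ι → R} (hd : ∀ i, d i ∈ unitary R) :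
    diagonal d ∈ unitaryGroup ι R := by
  rw [mem_unitaryGroup_iff, star_eq_conjTranspose, diagonal_conjTranspose, diagonal_mul_diagonal,
    ← diagonal_one]
  exact congrArg diagonal (funext fun i => Unitary.mul_star_self_of_mem (hd i))

theorem Matrix.permMatrix_mem_unitaryGroup (σ : Equiv.Perm ι) :
    σ.permMatrix R ∈ unitaryGroup ι R := by
  rw [mem_unitaryGroup_iff, star_eq_conjTranspose, conjTranspose_permMatrix, ← permMatrix_mul,
    inv_mul_cancel, permMatrix_one]

end UnitaryGroup

section Centralizer

variable {ι R : Type*} [Fintype ι] [DecidableEq ι]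

theorem Matrix.isDiag_of_commute_diagonal [CommRing R] [NoZeroDivisors R] {G : Matrix ι ι R}
    {d : ι → R} (hd : Function.Injective d) (h : Commute G (diagonal d)) : G.IsDiag := by
  intro i j hij
  have hij' : G i j * d j = d i * G i j := by
    simpa only [mul_diagonal, diagonal_mul] using congrFun (congrFun h.eq i) j
  have : (d j - d i) * G i j = 0 := by linear_combination hij'
  exact (mul_eq_zero.1 this).resolve_left (sub_ne_zero.2 (hd.ne (Ne.symm hij)))

theorem Matrix.comp_eq_of_commute_diagonal_permMatrix [NonAssocSemiring R] {e : ι → R}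
    {σ : Equiv.Perm ι} (h : Commute (diagonal e) (σ.permMatrix R)) : e ∘ σ = e := by
  funext i
  have := congrFun (congrFun h.eq i) (σ i)
  simpa [mul_diagonal, diagonal_mul, PEquiv.toMatrix_apply] using this.symm

end Centralizer

theorem apply_eq_apply_zero_of_comp_finRotate_eq {α : Type*} {n : ℕ} [NeZero n] {e : Fin n → α}
    (h : e ∘ finRotate n = e) (i : Fin n) : e i = e 0 := by
  obtain ⟨m, rfl⟩ := Nat.exists_eq_succ_of_ne_zero (NeZero.ne n)
  induction i using Fin.induction with
  | zero => rfl
  | succ i ih => rw [← ih, ← Fin.coeSucc_eq_succ, ← finRotate_apply]; exact congrFun h _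

section ClockShift

variable {R : Type*} [CommRing R] {n : ℕ}

def clockMatrix (ζ : R) : Matrix (Fin n) (Fin n) R := diagonal fun i => ζ ^ (i : ℕ)

variable (R n) in
def shiftMatrix : Matrix (Fin n) (Fin n) R := (finRotate n).permMatrix R

theorem pow_val_finRotate {M : Type*} [Monoid M] {ζ : M} (hζ : ζ ^ n = 1) (i : Fin n) :
    ζ ^ (finRotate n i : ℕ) = ζ ^ (i : ℕ) * ζ := by
  obtain _ | m := n
  · exact i.elim0
  rw [coe_finRotate]
  split_ifs with h
  · rw [h, Fin.val_last, pow_zero, ← pow_succ, hζ]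
  · rw [pow_succ]

theorem shiftMatrix_mul_clockMatrix {ζ : R} (hζ : ζ ^ n = 1) :
    shiftMatrix R n * clockMatrix ζ = ζ • (clockMatrix ζ * shiftMatrix R n) := by
  ext i j
  simp only [shiftMatrix, clockMatrix, mul_diagonal, diagonal_mul, Matrix.smul_apply, smul_eq_mul,
    PEquiv.toMatrix_apply, Equiv.toPEquiv_apply, Option.mem_def, Option.some.injEq]
  split_ifs with h
  · rw [← h, pow_val_finRotate hζ]; ring
  · simp

theorem clockMatrix_mem_unitaryGroup [StarRing R] {ζ : R} (hζ : ζ ∈ unitary R) :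
    clockMatrix ζ ∈ unitaryGroup (Fin n) R :=
  diagonal_mem_unitaryGroup fun _ => pow_mem hζ _

variable (R n) in
theorem shiftMatrix_mem_unitaryGroup [StarRing R] : shiftMatrix R n ∈ unitaryGroup (Fin n) R :=
  permMatrix_mem_unitaryGroup _

theorem eq_smul_one_of_commute_clockMatrix_of_commute_shiftMatrix [NeZero n] [NoZeroDivisors R]
    {ζ : R} (hζ : IsPrimitiveRoot ζ n) {G : Matrix (Fin n) (Fin n) R}
    (hD : Commute G (clockMatrix ζ)) (hP : Commute G (shiftMatrix R n)) : G = G 0 0 • 1 := by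
  have hG : G.IsDiag :=
    isDiag_of_commute_diagonal (fun i j h => Fin.ext (hζ.pow_inj i.isLt j.isLt h)) hD
  rw [← hG.diagonal_diag] at hP
  have hconst :=
    apply_eq_apply_zero_of_comp_finRotate_eq (comp_eq_of_commute_diagonal_permMatrix hP)
  rw [← hG.diagonal_diag, smul_one_eq_diagonal]
  exact congrArg diagonal (funext hconst)

end ClockShift

/-- For `n ≥ 2` and `ζ` a primitive `n`-th root of unity, there is a pair `a, b` in
`SU(n)` (elements of the unitary group of determinant `1`) whose commutator is `ζ·I`
and whose centralizer in `SU(n)` is exactly the center `{ω·I : ωⁿ = 1}`. -/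
theorem exists_irreducible_pair_SU
    (n : ℕ) (hn : 2 ≤ n) (ζ : ℂ) (hζ : IsPrimitiveRoot ζ n) :
    ∃ a b : Matrix.unitaryGroup (Fin n) ℂ,
      Matrix.det (a : Matrix (Fin n) (Fin n) ℂ) = 1 ∧
      Matrix.det (b : Matrix (Fin n) (Fin n) ℂ) = 1 ∧
      ((a * b * a⁻¹ * b⁻¹ : Matrix.unitaryGroup (Fin n) ℂ) : Matrix (Fin n) (Fin n) ℂ)
        = ζ • (1 : Matrix (Fin n) (Fin n) ℂ) ∧
      ∀ g : Matrix.unitaryGroup (Fin n) ℂ,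
        Matrix.det (g : Matrix (Fin n) (Fin n) ℂ) = 1 →
        g * a = a * g → g * b = b * g →
        ∃ ω : ℂ, ω ^ n = 1 ∧
          (g : Matrix (Fin n) (Fin n) ℂ) = ω • (1 : Matrix (Fin n) (Fin n) ℂ) := by
  have : NeZero n := ⟨by omega⟩
  have hζU : ζ ∈ unitary ℂ := Complex.mem_unitary_iff_norm_eq_one.2
    (Complex.norm_eq_one_of_pow_eq_one hζ.pow_eq_one (NeZero.ne n))
  obtain ⟨α, hα, ha⟩ := exists_smul_mem_specialUnitaryGroup (shiftMatrix_mem_unitaryGroup ℂ n)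
  obtain ⟨β, hβ, hb⟩ :=
    exists_smul_mem_specialUnitaryGroup (clockMatrix_mem_unitaryGroup (n := n) hζU)
  refine ⟨⟨_, ha.1⟩, ⟨_, hb.1⟩, ha.2, hb.2, ?_, fun g hg hga hgb => ?_⟩
  · refine Unitary.coe_commutator_eq_smul_one ?_
    rw [smul_mul_smul_comm, smul_mul_smul_comm, shiftMatrix_mul_clockMatrix hζ.pow_eq_one,
      smul_comm, mul_comm α]
  · have hP : Commute (g : Matrix (Fin n) (Fin n) ℂ) (shiftMatrix ℂ n) :=
      (Commute.smul_right_iff₀ hα).1 (congrArg Subtype.val hga)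
    have hD : Commute (g : Matrix (Fin n) (Fin n) ℂ) (clockMatrix ζ) :=
      (Commute.smul_right_iff₀ hβ).1 (congrArg Subtype.val hgb)
    have hscalar := eq_smul_one_of_commute_clockMatrix_of_commute_shiftMatrix hζ hD hP
    refine ⟨_, ?_, hscalar⟩
    rwa [hscalar, det_smul, det_one, mul_one, Fintype.card_fin] at hg
end

section
/- Let n ≥ 2 and let ζ ∈ ℂ be a primitive n-th root of unity. If (a,b) and (a',b') are pairs of elements of SU(n) with a b a⁻¹ b⁻¹ = ζ·I and a' b' a'⁻¹ b'⁻¹ = ζ·I, then there exists g ∈ SU(n) with g a g⁻¹ = a' and g b g⁻¹ = b'. -/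
/-!
Since `a b = ζ b a`, the matrix `a` maps the `μ`-eigenspace of `b` to its `μ ζ⁻¹`-eigenspace.
For a unit eigenvector `v` of `b`, the vectors `v, a v, …, a ^ (n - 1) v` are therefore
eigenvectors of the unitary `b` for the `n` distinct eigenvalues `μ ζ⁻ⁱ`, hence an orthonormal
basis; in it `b` is diagonal and `a` is a cyclic shift, weighted by the scalar `c` with
`a ^ n v = c v`. The determinant of `b` fixes `μ` up to a power of `ζ⁻¹`, and replacing `μ` by
`μ ζ⁻ʲ` amounts to starting from `a ^ j v`; the determinant of `a` then fixes `c`. So both pairs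
are conjugate to the same normal form by unitaries, and the resulting conjugating unitary is
moved into `SU(n)` by a scalar `n`-th root of its inverse determinant.
-/

open Matrix
open scoped ComplexOrder

namespace Matrix

section Eigenvectors

variable {m : Type*} [Fintype m]

theorem ne_zero_of_star_dotProduct_self_eq_one {R : Type*} [Semiring R] [StarRing R]
    [Nontrivial R] {x : m → R} (hx : star x ⬝ᵥ x = 1) : x ≠ 0 := by
  rintro rfl
  simp at hx

theorem exists_star_smul_dotProduct_smul_eq_one {x : m → ℂ} (hx : x ≠ 0) :
    ∃ t : ℂ, star (t • x) ⬝ᵥ (t • x) = 1 := by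
  have hnorm : star x ⬝ᵥ x = ((‖WithLp.toLp 2 x‖ ^ 2 : ℝ) : ℂ) := by
    rw [dotProduct_comm, ← EuclideanSpace.inner_toLp_toLp, inner_self_eq_norm_sq_to_K]
    simp
  have h0 : ‖WithLp.toLp 2 x‖ ≠ 0 := by simpa using hx
  refine ⟨(‖WithLp.toLp 2 x‖⁻¹ : ℝ), ?_⟩
  rw [star_smul, smul_dotProduct, dotProduct_smul, hnorm, smul_eq_mul, smul_eq_mul]
  simp only [Complex.star_def, Complex.conj_ofReal]
  push_cast
  field_simp

variable [DecidableEq m]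

theorem exists_unit_eigenvector [Nonempty m] (b : Matrix m m ℂ) :
    ∃ (μ : ℂ) (v : m → ℂ), star v ⬝ᵥ v = 1 ∧ b *ᵥ v = μ • v := by
  obtain ⟨μ, hμ⟩ := Module.End.exists_eigenvalue (toLin' b)
  obtain ⟨v, hv⟩ := hμ.exists_hasEigenvector
  obtain ⟨t, ht⟩ := exists_star_smul_dotProduct_smul_eq_one hv.2
  refine ⟨μ, t • v, ht, ?_⟩
  rw [mulVec_smul, ← toLin'_apply, hv.apply_eq_smul, smul_comm]

theorem star_mulVec_dotProduct_mulVec {R : Type*} [CommRing R] [StarRing R]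
    {a : Matrix m m R} (ha : a ∈ unitaryGroup m R) (x y : m → R) :
    star (a *ᵥ x) ⬝ᵥ (a *ᵥ y) = star x ⬝ᵥ y := by
  rw [star_mulVec, dotProduct_mulVec, vecMul_vecMul, ← star_eq_conjTranspose,
    mem_unitaryGroup_iff'.mp ha, vecMul_one]

theorem mulVec_pow_mulVec_eq_smul {R : Type*} [CommRing R] {a b : Matrix m m R} {v : m → R}
    {ω μ : R} (hba : b * a = ω • (a * b)) (hv : b *ᵥ v = μ • v) (k : ℕ) :
    b *ᵥ (a ^ k *ᵥ v) = (μ * ω ^ k) • (a ^ k *ᵥ v) := by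
  induction k with
  | zero => simpa using hv
  | succ k ih =>
    rw [pow_succ', ← mulVec_mulVec, mulVec_mulVec, hba, smul_mulVec, ← mulVec_mulVec, ih,
      mulVec_smul, smul_smul, mul_comm ω, pow_succ, mul_assoc]

variable {𝕜 : Type*} [RCLike 𝕜] {b : Matrix m m 𝕜} {x y : m → 𝕜} {l l' : 𝕜}

theorem star_mul_self_eq_one_of_mulVec_eq_smul (hb : b ∈ unitaryGroup m 𝕜)
    (hx : b *ᵥ x = l • x) (hx0 : x ≠ 0) : star l * l = 1 := by
  have h := star_mulVec_dotProduct_mulVec hb x x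
  rw [hx, star_smul, smul_dotProduct, dotProduct_smul, smul_smul, smul_eq_mul] at h
  exact mul_right_cancel₀ (dotProduct_star_self_eq_zero.not.mpr hx0) (h.trans (one_mul _).symm)

theorem ne_zero_of_mulVec_eq_smul (hb : b ∈ unitaryGroup m 𝕜) (hx : b *ᵥ x = l • x)
    (hx0 : x ≠ 0) : l ≠ 0 :=
  right_ne_zero_of_mul_eq_one (star_mul_self_eq_one_of_mulVec_eq_smul hb hx hx0)

theorem star_dotProduct_eq_zero_of_mulVec_eq_smul (hb : b ∈ unitaryGroup m 𝕜)
    (hx : b *ᵥ x = l • x) (hy : b *ᵥ y = l' • y) (hne : l ≠ l') : star x ⬝ᵥ y = 0 := by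
  obtain rfl | hx0 := eq_or_ne x 0
  · simp
  have hl := star_mul_self_eq_one_of_mulVec_eq_smul hb hx hx0
  have h := star_mulVec_dotProduct_mulVec hb x y
  rw [hx, hy, star_smul, smul_dotProduct, dotProduct_smul, smul_smul, smul_eq_mul] at h
  by_contra h0
  have hll' : star l * l' = star l * l := by
    rw [hl]
    exact mul_right_cancel₀ h0 (h.trans (one_mul _).symm)
  exact hne (mul_left_cancel₀ (left_ne_zero_of_mul_eq_one hl) hll').symm

end Eigenvectors

/-- Column `i` is `c • e 0` if `i + 1 = 0` in `Fin n`, and `e (i + 1)` otherwise. -/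
def shiftMatrix (n : ℕ) [NeZero n] (c : ℂ) : Matrix (Fin n) (Fin n) ℂ :=
  Equiv.Perm.permMatrix ℂ (Equiv.subRight (1 : Fin n)) *
    diagonal fun i => if i + 1 = 0 then c else 1

def clockMatrix (n : ℕ) (μ ω : ℂ) : Matrix (Fin n) (Fin n) ℂ :=
  diagonal fun i => μ * ω ^ (i : ℕ)

def orbitMatrix {n : ℕ} (a : Matrix (Fin n) (Fin n) ℂ) (v : Fin n → ℂ) :
    Matrix (Fin n) (Fin n) ℂ :=
  of fun j i => (a ^ (i : ℕ) *ᵥ v) j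

section Orbit

variable {n : ℕ}

theorem mul_shiftMatrix_apply [NeZero n] (M : Matrix (Fin n) (Fin n) ℂ) (c : ℂ) (j i : Fin n) :
    (M * shiftMatrix n c) j i = M j (i + 1) * if i + 1 = 0 then c else 1 := by
  rw [shiftMatrix, ← Matrix.mul_assoc, mul_diagonal, Equiv.Perm.permMatrix,
    PEquiv.mul_toMatrix_toPEquiv]
  simp

theorem det_shiftMatrix [NeZero n] (c : ℂ) :
    (shiftMatrix n c).det = Equiv.Perm.sign (Equiv.subRight (1 : Fin n)) * c := by
  rw [shiftMatrix, det_mul, det_permutation, det_diagonal]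
  congr 1
  simp_rw [add_eq_zero_iff_eq_neg]
  simp

theorem eq_of_det_shiftMatrix_eq [NeZero n] {c c' : ℂ}
    (h : (shiftMatrix n c).det = (shiftMatrix n c').det) : c = c' := by
  rw [det_shiftMatrix, det_shiftMatrix] at h
  exact mul_left_cancel₀ (by simp) h

theorem det_clockMatrix (μ ω : ℂ) :
    (clockMatrix n μ ω).det = μ ^ n * ∏ i : Fin n, ω ^ (i : ℕ) := by
  rw [clockMatrix, det_diagonal, Finset.prod_mul_distrib, Finset.prod_const, Finset.card_univ,
    Fintype.card_fin]

theorem exists_eq_mul_pow_of_det_clockMatrix_eq [NeZero n] {ω μ μ₀ : ℂ}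
    (hω : IsPrimitiveRoot ω n) (h : (clockMatrix n μ ω).det = (clockMatrix n μ₀ ω).det) :
    ∃ j : ℕ, μ = μ₀ * ω ^ j := by
  rw [det_clockMatrix, det_clockMatrix] at h
  have hpow : μ ^ n = μ₀ ^ n := mul_right_cancel₀
    (Finset.prod_ne_zero_iff.mpr fun i _ => pow_ne_zero _ (hω.ne_zero (NeZero.ne n))) h
  have hμ : μ ∈ Polynomial.nthRoots n (μ₀ ^ n) :=
    (Polynomial.mem_nthRoots (NeZero.pos n)).mpr hpow
  rw [hω.nthRoots_eq rfl] at hμ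
  obtain ⟨j, -, hj⟩ := Multiset.mem_map.mp hμ
  exact ⟨j, by rw [← hj, mul_comm]⟩

variable {a b : Matrix (Fin n) (Fin n) ℂ} {v : Fin n → ℂ} {ω μ : ℂ}

theorem star_pow_mulVec_dotProduct_pow_mulVec (ha : a ∈ unitaryGroup (Fin n) ℂ)
    (hb : b ∈ unitaryGroup (Fin n) ℂ) (hω : IsPrimitiveRoot ω n) (hba : b * a = ω • (a * b))
    (hv : b *ᵥ v = μ • v) (hv1 : star v ⬝ᵥ v = 1) (i j : Fin n) :
    star (a ^ (i : ℕ) *ᵥ v) ⬝ᵥ (a ^ (j : ℕ) *ᵥ v) = if i = j then 1 else 0 := by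
  split_ifs with hij
  · rw [hij, star_mulVec_dotProduct_mulVec (pow_mem ha _), hv1]
  have hμ := ne_zero_of_mulVec_eq_smul hb hv (ne_zero_of_star_dotProduct_self_eq_one hv1)
  refine star_dotProduct_eq_zero_of_mulVec_eq_smul hb (mulVec_pow_mulVec_eq_smul hba hv _)
    (mulVec_pow_mulVec_eq_smul hba hv _) fun h => hij (Fin.ext ?_)
  exact hω.pow_inj i.isLt j.isLt (mul_left_cancel₀ hμ h)

theorem orbitMatrix_mem_unitaryGroup (ha : a ∈ unitaryGroup (Fin n) ℂ)
    (hb : b ∈ unitaryGroup (Fin n) ℂ) (hω : IsPrimitiveRoot ω n) (hba : b * a = ω • (a * b))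
    (hv : b *ᵥ v = μ • v) (hv1 : star v ⬝ᵥ v = 1) :
    orbitMatrix a v ∈ unitaryGroup (Fin n) ℂ := by
  rw [mem_unitaryGroup_iff']
  ext i j
  rw [one_apply, ← star_pow_mulVec_dotProduct_pow_mulVec ha hb hω hba hv hv1]
  simp [mul_apply, orbitMatrix, dotProduct]

theorem exists_pow_mulVec_eq_smul [NeZero n] (ha : a ∈ unitaryGroup (Fin n) ℂ)
    (hb : b ∈ unitaryGroup (Fin n) ℂ) (hω : IsPrimitiveRoot ω n) (hba : b * a = ω • (a * b))
    (hv : b *ᵥ v = μ • v) (hv1 : star v ⬝ᵥ v = 1) : ∃ c : ℂ, a ^ n *ᵥ v = c • v := by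
  set U := orbitMatrix a v
  have hU := orbitMatrix_mem_unitaryGroup ha hb hω hba hv hv1
  have hx : b *ᵥ (a ^ n *ᵥ v) = μ • (a ^ n *ᵥ v) := by
    rw [mulVec_pow_mulVec_eq_smul hba hv, hω.pow_eq_one, mul_one]
  set x := a ^ n *ᵥ v
  -- `x` is orthogonal to each column `a ^ i *ᵥ v`, `i ≠ 0`, whose eigenvalue `μ * ω ^ i` is not `μ`
  have hcoord : star U *ᵥ x = Pi.single 0 ((star U *ᵥ x) 0) := by
    ext i
    rcases eq_or_ne i 0 with rfl | hi
    · simp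
    have hμi : μ * ω ^ (i : ℕ) ≠ μ := by
      rw [Ne, mul_eq_left₀
        (ne_zero_of_mulVec_eq_smul hb hv (ne_zero_of_star_dotProduct_self_eq_one hv1))]
      exact hω.pow_ne_one_of_pos_of_lt (Fin.val_ne_zero_iff.mpr hi) i.isLt
    rw [Pi.single_eq_of_ne hi, ← star_dotProduct_eq_zero_of_mulVec_eq_smul hb
      (mulVec_pow_mulVec_eq_smul hba hv i) hx hμi]
    simp [U, orbitMatrix, mulVec, dotProduct]
  refine ⟨(star U *ᵥ x) 0, ?_⟩
  calc x = U *ᵥ (star U *ᵥ x) := by rw [mulVec_mulVec, mem_unitaryGroup_iff.mp hU, one_mulVec]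
    _ = _ := by
      rw [hcoord, mulVec_single]
      ext j
      simp [U, orbitMatrix, mul_comm]

theorem mul_orbitMatrix_eq_orbitMatrix_mul_shiftMatrix [NeZero n] {c : ℂ}
    (hc : a ^ n *ᵥ v = c • v) : a * orbitMatrix a v = orbitMatrix a v * shiftMatrix n c := by
  ext j i
  rw [mul_shiftMatrix_apply]
  have hcol : (a * orbitMatrix a v) j i = (a ^ ((i : ℕ) + 1) *ᵥ v) j := by
    rw [pow_succ', ← mulVec_mulVec]
    rfl
  rw [hcol]
  rcases (show (i : ℕ) + 1 ≤ n from i.isLt).lt_or_eq with hlt | heq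
  · have h1 : ((i + 1 : Fin n) : ℕ) = i + 1 := Fin.val_add_one_of_lt' hlt
    have h0 : i + 1 ≠ 0 := fun h => by simp [h] at h1
    simp [orbitMatrix, h1, h0]
  · have h0 : i + 1 = 0 := by
      ext
      rw [Fin.val_add, Fin.val_one', Nat.add_mod_mod, heq, Nat.mod_self, Fin.val_zero]
    simp [orbitMatrix, h0, heq, hc, mul_comm]

theorem mul_orbitMatrix_eq_orbitMatrix_mul_clockMatrix (hba : b * a = ω • (a * b))
    (hv : b *ᵥ v = μ • v) : b * orbitMatrix a v = orbitMatrix a v * clockMatrix n μ ω := by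
  ext j i
  have hcol : (b * orbitMatrix a v) j i = (b *ᵥ (a ^ (i : ℕ) *ᵥ v)) j := rfl
  rw [hcol, mulVec_pow_mulVec_eq_smul hba hv, clockMatrix, mul_diagonal]
  simp [orbitMatrix, mul_comm]

end Orbit

section UnitaryGroup

variable {m : Type*} [Fintype m] [DecidableEq m]

theorem star_mul_mul_eq_of_mul_eq {U M C : Matrix m m ℂ} (hU : U ∈ unitaryGroup m ℂ)
    (h : M * U = U * C) : star U * M * U = C := by
  rw [mul_assoc, h, ← mul_assoc, mem_unitaryGroup_iff'.mp hU, one_mul]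

theorem det_inv_mul_mul (u x : unitaryGroup m ℂ) :
    ((u⁻¹ * x * u : unitaryGroup m ℂ) : Matrix m m ℂ).det = (x : Matrix m m ℂ).det := by
  rw [UnitaryGroup.mul_val, UnitaryGroup.mul_val, det_mul, det_mul, mul_comm, ← mul_assoc,
    ← det_mul, ← UnitaryGroup.mul_val, mul_inv_cancel, UnitaryGroup.one_val, det_one, one_mul]

theorem mul_eq_inv_smul_mul_of_commutator_eq_smul {a b : unitaryGroup m ℂ} {ζ : ℂ}
    (hζ : ζ ≠ 0) (h : ((a * b * a⁻¹ * b⁻¹ : unitaryGroup m ℂ) : Matrix m m ℂ) = ζ • 1) :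
    (b : Matrix m m ℂ) * a = ζ⁻¹ • (a * b) := by
  have hab : ((a * b : unitaryGroup m ℂ) : Matrix m m ℂ) = ζ • (b * a : Matrix m m ℂ) :=
    calc ((a * b : unitaryGroup m ℂ) : Matrix m m ℂ)
        = ((a * b * a⁻¹ * b⁻¹ * (b * a) : unitaryGroup m ℂ) : Matrix m m ℂ) := by group
      _ = ζ • (b * a : Matrix m m ℂ) := by
        rw [UnitaryGroup.mul_val _ (b * a), h, smul_mul_assoc, one_mul]
        rfl
  rw [UnitaryGroup.mul_val] at hab
  rw [hab, smul_smul, inv_mul_cancel₀ hζ, one_smul]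

theorem exists_det_smul_eq_one [Nonempty m] (g : unitaryGroup m ℂ) :
    ∃ r : unitary ℂ, ((r • g : unitaryGroup m ℂ) : Matrix m m ℂ).det = 1 := by
  obtain ⟨ρ, hρ⟩ :=
    IsAlgClosed.exists_pow_nat_eq ((g : Matrix m m ℂ).det)⁻¹ (Fintype.card_pos (α := m))
  have hg : ‖(g : Matrix m m ℂ).det‖ = 1 :=
    CStarRing.norm_of_mem_unitary (det_of_mem_unitary g.2)
  have hρ1 : ‖ρ‖ = 1 := by
    rw [← pow_eq_one_iff_of_nonneg (norm_nonneg ρ) (Fintype.card_ne_zero (α := m)), ← norm_pow,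
      hρ, norm_inv, hg, inv_one]
  have hρu : ρ ∈ unitary ℂ := by
    rw [Unitary.mem_iff_star_mul_self, Complex.star_def, Complex.conj_mul', hρ1]
    norm_num
  refine ⟨⟨ρ, hρu⟩, ?_⟩
  rw [Unitary.coe_smul, Submonoid.smul_def, det_smul, hρ, inv_mul_cancel₀]
  exact norm_ne_zero_iff.mp (hg.trans_ne one_ne_zero)

theorem smul_mul_mul_inv_smul (r : unitary ℂ) (g x : unitaryGroup m ℂ) :
    (r • g) * x * (r • g)⁻¹ = g * x * g⁻¹ := by
  apply Subtype.ext
  simp only [UnitaryGroup.mul_val, UnitaryGroup.inv_val, Unitary.coe_smul, Submonoid.smul_def,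
    star_smul, smul_mul_assoc, mul_smul_comm, smul_smul]
  rw [Unitary.coe_star_mul_self, one_smul]

end UnitaryGroup

section NormalForm

variable {n : ℕ} [NeZero n] {a b : unitaryGroup (Fin n) ℂ} {ω μ : ℂ}

theorem exists_conj_eq_shiftMatrix_clockMatrix (hω : IsPrimitiveRoot ω n)
    (hba : (b : Matrix (Fin n) (Fin n) ℂ) * a = ω • (a * b)) {v : Fin n → ℂ}
    (hv : (b : Matrix (Fin n) (Fin n) ℂ) *ᵥ v = μ • v) (hv1 : star v ⬝ᵥ v = 1) :
    ∃ (u : unitaryGroup (Fin n) ℂ) (c : ℂ),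
      ((u⁻¹ * a * u : unitaryGroup (Fin n) ℂ) : Matrix (Fin n) (Fin n) ℂ) = shiftMatrix n c ∧
      ((u⁻¹ * b * u : unitaryGroup (Fin n) ℂ) : Matrix (Fin n) (Fin n) ℂ) =
        clockMatrix n μ ω := by
  obtain ⟨c, hc⟩ := exists_pow_mulVec_eq_smul a.2 b.2 hω hba hv hv1
  have hU := orbitMatrix_mem_unitaryGroup a.2 b.2 hω hba hv hv1
  exact ⟨⟨_, hU⟩, c,
    star_mul_mul_eq_of_mul_eq hU (mul_orbitMatrix_eq_orbitMatrix_mul_shiftMatrix hc),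
    star_mul_mul_eq_of_mul_eq hU (mul_orbitMatrix_eq_orbitMatrix_mul_clockMatrix hba hv)⟩

theorem exists_conj_eq_shiftMatrix_clockMatrix_of_det_eq (hω : IsPrimitiveRoot ω n)
    (hba : (b : Matrix (Fin n) (Fin n) ℂ) * a = ω • (a * b))
    (hdet : (b : Matrix (Fin n) (Fin n) ℂ).det = (clockMatrix n μ ω).det) :
    ∃ (u : unitaryGroup (Fin n) ℂ) (c : ℂ),
      ((u⁻¹ * a * u : unitaryGroup (Fin n) ℂ) : Matrix (Fin n) (Fin n) ℂ) = shiftMatrix n c ∧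
      ((u⁻¹ * b * u : unitaryGroup (Fin n) ℂ) : Matrix (Fin n) (Fin n) ℂ) =
        clockMatrix n μ ω := by
  obtain ⟨μ₀, v, hv1, hv⟩ := exists_unit_eigenvector (b : Matrix (Fin n) (Fin n) ℂ)
  obtain ⟨u₀, -, -, hb₀⟩ := exists_conj_eq_shiftMatrix_clockMatrix hω hba hv hv1
  obtain ⟨j, rfl⟩ := exists_eq_mul_pow_of_det_clockMatrix_eq hω
    (hdet.symm.trans (by rw [← hb₀, det_inv_mul_mul]))
  exact exists_conj_eq_shiftMatrix_clockMatrix hω hba (mulVec_pow_mulVec_eq_smul hba hv j)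
    (by rw [star_mulVec_dotProduct_mulVec (pow_mem a.2 j), hv1])

end NormalForm

end Matrix

theorem mul_mul_inv_eq_of_inv_mul_mul_eq {G : Type*} [Group G] {u u' x x' : G}
    (h : u⁻¹ * x * u = u'⁻¹ * x' * u') : u' * u⁻¹ * x * (u' * u⁻¹)⁻¹ = x' :=
  calc u' * u⁻¹ * x * (u' * u⁻¹)⁻¹ = u' * (u⁻¹ * x * u) * u'⁻¹ := by group
    _ = x' := by rw [h]; group

/-- For `n ≥ 2` and `ζ` a primitive `n`-th root of unity, any two pairs in `SU(n)`
(elements of the unitary group of determinant `1`) with commutator `ζ·I` are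
conjugate by an element of `SU(n)`. -/
theorem pairs_with_commutator_primitive_root_conjugate_SU
    (n : ℕ) (hn : 2 ≤ n) (ζ : ℂ) (hζ : IsPrimitiveRoot ζ n)
    (a b a' b' : Matrix.unitaryGroup (Fin n) ℂ)
    (ha : Matrix.det (a : Matrix (Fin n) (Fin n) ℂ) = 1)
    (hb : Matrix.det (b : Matrix (Fin n) (Fin n) ℂ) = 1)
    (ha' : Matrix.det (a' : Matrix (Fin n) (Fin n) ℂ) = 1)
    (hb' : Matrix.det (b' : Matrix (Fin n) (Fin n) ℂ) = 1)
    (hab : ((a * b * a⁻¹ * b⁻¹ : Matrix.unitaryGroup (Fin n) ℂ) : Matrix (Fin n) (Fin n) ℂ)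
        = ζ • (1 : Matrix (Fin n) (Fin n) ℂ))
    (hab' : ((a' * b' * a'⁻¹ * b'⁻¹ : Matrix.unitaryGroup (Fin n) ℂ) : Matrix (Fin n) (Fin n) ℂ)
        = ζ • (1 : Matrix (Fin n) (Fin n) ℂ)) :
    ∃ g : Matrix.unitaryGroup (Fin n) ℂ,
      Matrix.det (g : Matrix (Fin n) (Fin n) ℂ) = 1 ∧
      g * a * g⁻¹ = a' ∧ g * b * g⁻¹ = b' := by
  have : NeZero n := ⟨by omega⟩
  have hζ0 : ζ ≠ 0 := hζ.ne_zero (NeZero.ne n)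
  obtain ⟨μ, v, hv1, hv⟩ := exists_unit_eigenvector (b : Matrix (Fin n) (Fin n) ℂ)
  obtain ⟨u, c, hua, hub⟩ := exists_conj_eq_shiftMatrix_clockMatrix hζ.inv
    (mul_eq_inv_smul_mul_of_commutator_eq_smul hζ0 hab) hv hv1
  obtain ⟨u', c', hua', hub'⟩ := exists_conj_eq_shiftMatrix_clockMatrix_of_det_eq hζ.inv
    (mul_eq_inv_smul_mul_of_commutator_eq_smul hζ0 hab') (by rw [hb', ← hub, det_inv_mul_mul, hb])
  obtain rfl : c = c' := eq_of_det_shiftMatrix_eq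
    (by rw [← hua, ← hua', det_inv_mul_mul, det_inv_mul_mul, ha, ha'])
  obtain ⟨r, hr⟩ := exists_det_smul_eq_one (u' * u⁻¹)
  refine ⟨r • (u' * u⁻¹), hr, ?_, ?_⟩ <;> rw [smul_mul_mul_inv_smul]
  · exact mul_mul_inv_eq_of_inv_mul_mul_eq (Subtype.ext (hua.trans hua'.symm))
  · exact mul_mul_inv_eq_of_inv_mul_mul_eq (Subtype.ext (hub.trans hub'.symm))
end

section
/- Let n ≥ 2 and let ζ ∈ ℂ be a primitive n-th root of unity. If (a,b) and (a',b') are pairs of elements of SL(n,ℂ) with a b a⁻¹ b⁻¹ = ζ·I and a' b' a'⁻¹ b'⁻¹ = ζ·I, then there exists g ∈ SL(n,ℂ) with g a g⁻¹ = a' and g b g⁻¹ = b'. -/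
/-!
If `A B = ζ B A` and `B v = μ v`, then `B (Aᵏ v) = ζ⁻ᵏ μ Aᵏ v`, so the vectors `Aᵏ v` (`k < n`)
are eigenvectors of `B` with distinct eigenvalues and form a basis. Taking `v` to be also an
eigenvector of `Aⁿ` (which commutes with `B` because `ζⁿ = 1`) and rescaling the basis, `A` becomes
`d` times the cyclic shift and `B` becomes `μ` times the clock matrix `diag (ζ⁻ᵏ)`. Two pairs in
this normal form are conjugate as soon as their scalars `(d, μ)` agree. Equal determinants force
the ratios of the scalars to be `n`-th roots of unity, i.e. powers of `ζ`, and these are absorbed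
by conjugating with `Bⁱ Aʲ`. An invertible intertwiner is finally rescaled into `SL(n, ℂ)` by an
`n`-th root of its inverse determinant.
-/

open Module

section SkewCommute

variable {K A : Type*} [CommSemiring K] [Semiring A] [Algebra K A] {a b : A} {c : K}

theorem pow_mul_eq_smul_mul_pow (h : a * b = c • (b * a)) (k : ℕ) :
    a ^ k * b = c ^ k • (b * a ^ k) := by
  induction k with
  | zero => simp
  | succ k ih =>
    rw [pow_succ, mul_assoc, h, mul_smul_comm, ← mul_assoc, ih, smul_mul_assoc, smul_smul,
      pow_succ', mul_assoc]

theorem mul_pow_eq_smul_pow_mul (h : a * b = c • (b * a)) (k : ℕ) :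
    a * b ^ k = c ^ k • (b ^ k * a) := by
  induction k with
  | zero => simp
  | succ k ih =>
    rw [pow_succ, ← mul_assoc, ih, smul_mul_assoc, mul_assoc, h, mul_smul_comm, smul_smul,
      pow_succ, mul_assoc]

end SkewCommute

theorem exists_semiconjBy_pow_smul_of_mul_eq_smul_mul {K A : Type*} [Field K] [Semiring A]
    [Algebra K A] {ζ : K} {f g : A} (hζ : ζ ≠ 0) (hf : IsUnit f) (hg : IsUnit g)
    (hfg : f * g = ζ • (g * f)) (i j : ℕ) :
    ∃ x : A, IsUnit x ∧ SemiconjBy x f (ζ⁻¹ ^ i • f) ∧ SemiconjBy x g (ζ ^ j • g) := by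
  have hgf : g * f = ζ⁻¹ • (f * g) := by rw [hfg, smul_smul, inv_mul_cancel₀ hζ, one_smul]
  refine ⟨g ^ i * f ^ j, (hg.pow i).mul (hf.pow j), ?_, ?_⟩
  · rw [SemiconjBy, mul_assoc, pow_mul_comm', ← mul_assoc, pow_mul_eq_smul_mul_pow hgf,
      smul_mul_assoc, smul_mul_assoc, mul_assoc]
  · rw [SemiconjBy, mul_assoc, pow_mul_eq_smul_mul_pow hfg, mul_smul_comm, smul_mul_assoc,
      ← mul_assoc, ← mul_assoc, pow_mul_comm']

namespace Module.End

variable {K V : Type*} [Field K] [AddCommGroup V] [Module K V] {f g f' g' : End K V}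

theorem exists_hasEigenvector_of_commute [IsAlgClosed K] [FiniteDimensional K V] [Nontrivial V]
    (h : Commute f g) : ∃ v μ ν, f.HasEigenvector μ v ∧ g.HasEigenvector ν v := by
  obtain ⟨μ, hμ⟩ := f.exists_eigenvalue
  have : Nontrivial (f.eigenspace μ) := Submodule.nontrivial_iff_ne_bot.mpr hμ
  obtain ⟨ν, hν⟩ := exists_eigenvalue (g.restrict (mapsTo_genEigenspace_of_comm h μ 1))
  obtain ⟨⟨v, hvμ⟩, hv⟩ := hν.exists_hasEigenvector
  have hv0 : v ≠ 0 := fun h0 => hv.2 (Subtype.ext h0)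
  exact ⟨v, μ, ν, ⟨hvμ, hv0⟩,
    ⟨mem_eigenspace_iff.mpr (congrArg Subtype.val hv.apply_eq_smul), hv0⟩⟩

theorem HasEigenvector.smul {μ a : K} {v : V} (hv : f.HasEigenvector μ v) (ha : a ≠ 0) :
    f.HasEigenvector μ (a • v) :=
  hasEigenvector_iff.mpr ⟨(f.eigenspace μ).smul_mem a hv.1, smul_ne_zero ha hv.2⟩

theorem HasEigenvector.ne_zero_of_isUnit {μ : K} {v : V} (hv : f.HasEigenvector μ v)
    (hf : IsUnit f) : μ ≠ 0 := by
  rintro rfl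
  exact hv.2 (((isUnit_iff f).mp hf).1 (by simpa using hv.apply_eq_smul))

theorem HasEigenvector.pow_apply_of_mul_eq_smul_mul {c μ : K} {v : V}
    (hgf : g * f = c • (f * g)) (hv : g.HasEigenvector μ v) (hf : IsUnit f) (m : ℕ) :
    g.HasEigenvector (c ^ m * μ) ((f ^ m) v) := by
  refine hasEigenvector_iff.mpr ⟨mem_eigenspace_iff.mpr ?_, ?_⟩
  · rw [← mul_apply, mul_pow_eq_smul_pow_mul hgf, LinearMap.smul_apply, mul_apply,
      hv.apply_eq_smul, map_smul, smul_smul]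
  · exact fun h0 => hv.2 (((isUnit_iff _).mp (hf.pow m)).1 (by rw [h0, map_zero]))

theorem pow_finrank_eq_one_of_semiconjBy_smul {x : End K V} {s : K} (hf : IsUnit f)
    (hx : IsUnit x) (h : SemiconjBy x (s • f) f') (hdet : LinearMap.det f = LinearMap.det f') :
    s ^ finrank K V = 1 := by
  have hconj : LinearMap.det (s • f) = LinearMap.det f' :=
    isConj_iff_eq.mp (LinearMap.det.map_isConj ⟨hx.unit, h⟩)
  rw [LinearMap.det_smul, ← hdet] at hconj
  exact (mul_eq_right₀ (LinearMap.isUnit_det f hf).ne_zero).mp hconj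

variable {n : ℕ} [NeZero n] {ζ d μ : K} {u u' : Basis (Fin n) K V}

/-- In the basis `u`, `f` is `d` times the cyclic shift and `g` is `μ` times the clock matrix
`diag (ζ⁻ᵏ)`. -/
def IsClockShiftBasis (ζ : K) (f g : End K V) (u : Basis (Fin n) K V) (d μ : K) : Prop :=
  ∀ k, f (u k) = d • u (k + 1) ∧ g (u k) = (ζ⁻¹ ^ (k : ℕ) * μ) • u k

theorem exists_isClockShiftBasis [IsAlgClosed K] [FiniteDimensional K V] (hV : finrank K V = n)
    (hζ : IsPrimitiveRoot ζ n) (hf : IsUnit f) (hg : IsUnit g) (hfg : f * g = ζ • (g * f)) :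
    ∃ (u : Basis (Fin n) K V) (d μ : K), d ≠ 0 ∧ μ ≠ 0 ∧ IsClockShiftBasis ζ f g u d μ := by
  have hn : 0 < n := NeZero.pos n
  have : Nontrivial V := Module.nontrivial_of_finrank_pos (hV ▸ hn)
  have hgf : g * f = ζ⁻¹ • (f * g) := by
    rw [hfg, smul_smul, inv_mul_cancel₀ (hζ.ne_zero hn.ne'), one_smul]
  have hcomm : Commute (f ^ n) g := by
    rw [Commute, SemiconjBy, mul_pow_eq_smul_pow_mul hgf, hζ.inv.pow_eq_one, one_smul]
  obtain ⟨v, c, μ, hvc, hvμ⟩ := exists_hasEigenvector_of_commute hcomm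
  obtain ⟨d, rfl⟩ := IsAlgClosed.exists_pow_nat_eq c hn
  have hd : d ≠ 0 := fun h => hvc.ne_zero_of_isUnit (hf.pow n) (by rw [h, zero_pow hn.ne'])
  obtain ⟨U, hU⟩ : ∃ U : ℕ → V, ∀ m, U m = d⁻¹ ^ m • (f ^ m) v := ⟨_, fun _ => rfl⟩
  have hU_periodic : Function.Periodic U n := fun m => by
    rw [hU, hU, pow_add f, mul_apply, hvc.apply_eq_smul, map_smul, smul_smul, pow_add, mul_assoc,
      ← mul_pow, inv_mul_cancel₀ hd, one_pow, mul_one]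
  have hfU (m : ℕ) : f (U m) = d • U (m + 1) := by
    rw [hU, hU, map_smul, ← mul_apply, ← pow_succ', smul_smul, pow_succ' d⁻¹, ← mul_assoc,
      mul_inv_cancel₀ hd, one_mul]
  have hgU (m : ℕ) : g.HasEigenvector (ζ⁻¹ ^ m * μ) (U m) :=
    hU m ▸ (hvμ.pow_apply_of_mul_eq_smul_mul hgf hf m).smul (pow_ne_zero m (inv_ne_zero hd))
  have hind : LinearIndependent K (fun k : Fin n => U k) :=
    g.eigenvectors_linearIndependent' (fun k : Fin n => ζ⁻¹ ^ (k : ℕ) * μ)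
      (fun k l h => Fin.ext
        (hζ.inv.pow_inj k.2 l.2 (mul_right_cancel₀ (hvμ.ne_zero_of_isUnit hg) h)))
      _ (fun k => hgU k)
  have : Nonempty (Fin n) := ⟨⟨0, hn⟩⟩
  refine ⟨basisOfLinearIndependentOfCardEqFinrank hind (by simp [hV]), d, μ, hd,
    hvμ.ne_zero_of_isUnit hg, fun k => ?_⟩
  simp only [coe_basisOfLinearIndependentOfCardEqFinrank]
  refine ⟨?_, (hgU k).apply_eq_smul⟩
  rw [hfU, Fin.val_add, Fin.val_one', Nat.add_mod_mod, hU_periodic.map_mod_nat]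

theorem IsClockShiftBasis.smul (h : IsClockShiftBasis ζ f g u d μ) (s t : K) :
    IsClockShiftBasis ζ (s • f) (t • g) u (s * d) (t * μ) := fun k => by
  rw [LinearMap.smul_apply, LinearMap.smul_apply, (h k).1, (h k).2, smul_smul, smul_smul,
    mul_left_comm]
  exact ⟨rfl, rfl⟩

theorem IsClockShiftBasis.exists_semiconjBy (h : IsClockShiftBasis ζ f g u d μ)
    (h' : IsClockShiftBasis ζ f' g' u' d μ) :
    ∃ x : End K V, IsUnit x ∧ SemiconjBy x f f' ∧ SemiconjBy x g g' := by
  refine ⟨u.equiv u' (Equiv.refl _), (isUnit_iff _).mpr (LinearEquiv.bijective _),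
    u.ext fun k => ?_, u.ext fun k => ?_⟩ <;>
  simp [(h k).1, (h k).2, (h' k).1, (h' k).2]

theorem exists_semiconjBy_of_mul_eq_smul_mul [IsAlgClosed K] [FiniteDimensional K V]
    (hV : finrank K V = n) (hζ : IsPrimitiveRoot ζ n) (hf : IsUnit f) (hg : IsUnit g)
    (hf' : IsUnit f') (hg' : IsUnit g') (hfg : f * g = ζ • (g * f))
    (hfg' : f' * g' = ζ • (g' * f')) (hdetf : LinearMap.det f = LinearMap.det f')
    (hdetg : LinearMap.det g = LinearMap.det g') :
    ∃ x : End K V, IsUnit x ∧ SemiconjBy x f f' ∧ SemiconjBy x g g' := by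
  obtain ⟨u, d, μ, hd, hμ, hu⟩ := exists_isClockShiftBasis hV hζ hf hg hfg
  obtain ⟨u', d', μ', -, -, hu'⟩ := exists_isClockShiftBasis hV hζ hf' hg' hfg'
  have hscaled := hu.smul (d' / d) (μ' / μ)
  rw [div_mul_cancel₀ d' hd, div_mul_cancel₀ μ' hμ] at hscaled
  obtain ⟨x, hx, hxf, hxg⟩ := hscaled.exists_semiconjBy hu'
  obtain ⟨i, -, hi⟩ := hζ.inv.eq_pow_of_pow_eq_one
    (hV ▸ pow_finrank_eq_one_of_semiconjBy_smul hf hx hxf hdetf)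
  obtain ⟨j, -, hj⟩ := hζ.eq_pow_of_pow_eq_one
    (hV ▸ pow_finrank_eq_one_of_semiconjBy_smul hg hx hxg hdetg)
  obtain ⟨y, hy, hyf, hyg⟩ :=
    exists_semiconjBy_pow_smul_of_mul_eq_smul_mul (hζ.ne_zero (NeZero.ne n)) hf hg hfg i j
  rw [hi] at hyf
  rw [hj] at hyg
  exact ⟨x * y, hx.mul hy, hxf.mul_left hyf, hxg.mul_left hyg⟩

end Module.End

namespace Matrix

theorem exists_semiconjBy_of_mul_eq_smul_mul {K ι : Type*} [Field K] [IsAlgClosed K]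
    [Fintype ι] [DecidableEq ι] {n : ℕ} [NeZero n] (hι : Fintype.card ι = n) {ζ : K}
    (hζ : IsPrimitiveRoot ζ n) {A B A' B' : Matrix ι ι K} (hA : IsUnit A) (hB : IsUnit B)
    (hA' : IsUnit A') (hB' : IsUnit B') (hAB : A * B = ζ • (B * A))
    (hAB' : A' * B' = ζ • (B' * A')) (hdetA : A.det = A'.det) (hdetB : B.det = B'.det) :
    ∃ X : Matrix ι ι K, IsUnit X ∧ SemiconjBy X A A' ∧ SemiconjBy X B B' := by
  let φ := toLinAlgEquiv' (R := K) (n := ι)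
  obtain ⟨x, hx, hxA, hxB⟩ := Module.End.exists_semiconjBy_of_mul_eq_smul_mul
    (by simpa using hι) hζ (hA.map φ) (hB.map φ) (hA'.map φ) (hB'.map φ)
    (by rw [← map_mul, hAB, map_smul, map_mul]) (by rw [← map_mul, hAB', map_smul, map_mul])
    ((LinearMap.det_toLin' A).trans (hdetA.trans (LinearMap.det_toLin' A').symm))
    ((LinearMap.det_toLin' B).trans (hdetB.trans (LinearMap.det_toLin' B').symm))
  refine ⟨φ.symm x, hx.map φ.symm, ?_, ?_⟩
  · simpa using hxA.map φ.symm
  · simpa using hxB.map φ.symm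

end Matrix

namespace Matrix.SpecialLinearGroup

variable {R ι : Type*} [CommRing R] [Fintype ι] [DecidableEq ι]

theorem isUnit_coe (a : SpecialLinearGroup ι R) : IsUnit (a : Matrix ι ι R) :=
  (isUnit_iff_isUnit_det _).mpr (by rw [a.det_coe]; exact isUnit_one)

theorem coe_mul_eq_smul_coe_mul_of_coe_commutator {a b : SpecialLinearGroup ι R} {ζ : R}
    (h : ((a * b * a⁻¹ * b⁻¹ : SpecialLinearGroup ι R) : Matrix ι ι R) = ζ • 1) :
    (a : Matrix ι ι R) * b = ζ • ((b : Matrix ι ι R) * a) := by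
  have hab : a * b = a * b * a⁻¹ * b⁻¹ * (b * a) := by group
  rw [← coe_mul, hab, coe_mul, h, coe_mul, smul_mul_assoc, one_mul]

theorem mul_mul_inv_eq_of_semiconjBy_coe {g a a' : SpecialLinearGroup ι R}
    (h : SemiconjBy (g : Matrix ι ι R) a a') : g * a * g⁻¹ = a' := by
  rw [mul_inv_eq_iff_eq_mul]
  exact Subtype.ext (by simpa only [coe_mul] using h.eq)

theorem exists_coe_eq_smul {K : Type*} [Field K] [IsAlgClosed K] [Nonempty ι]
    {X : Matrix ι ι K} (hX : IsUnit X) :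
    ∃ (g : SpecialLinearGroup ι K) (l : K), (g : Matrix ι ι K) = l • X := by
  have hdet : X.det ≠ 0 := ((isUnit_iff_isUnit_det X).mp hX).ne_zero
  obtain ⟨l, hl⟩ := IsAlgClosed.exists_pow_nat_eq X.det⁻¹ (Fintype.card_pos (α := ι))
  exact ⟨⟨l • X, by rw [det_smul, hl, inv_mul_cancel₀ hdet]⟩, l, rfl⟩

end Matrix.SpecialLinearGroup

/-- For `n ≥ 2` and `ζ` a primitive `n`-th root of unity, any two pairs in `SL(n,ℂ)`
with commutator `ζ·I` are conjugate by an element of `SL(n,ℂ)`. -/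
theorem pairs_with_commutator_primitive_root_conjugate_SL
    (n : ℕ) (hn : 2 ≤ n) (ζ : ℂ) (hζ : IsPrimitiveRoot ζ n)
    (a b a' b' : Matrix.SpecialLinearGroup (Fin n) ℂ)
    (hab : ((a * b * a⁻¹ * b⁻¹ : Matrix.SpecialLinearGroup (Fin n) ℂ) :
        Matrix (Fin n) (Fin n) ℂ) = ζ • (1 : Matrix (Fin n) (Fin n) ℂ))
    (hab' : ((a' * b' * a'⁻¹ * b'⁻¹ : Matrix.SpecialLinearGroup (Fin n) ℂ) :
        Matrix (Fin n) (Fin n) ℂ) = ζ • (1 : Matrix (Fin n) (Fin n) ℂ)) :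
    ∃ g : Matrix.SpecialLinearGroup (Fin n) ℂ,
      g * a * g⁻¹ = a' ∧ g * b * g⁻¹ = b' := by
  have : NeZero n := ⟨by omega⟩
  obtain ⟨X, hX, hXa, hXb⟩ := Matrix.exists_semiconjBy_of_mul_eq_smul_mul (Fintype.card_fin n) hζ
    a.isUnit_coe b.isUnit_coe a'.isUnit_coe b'.isUnit_coe
    (Matrix.SpecialLinearGroup.coe_mul_eq_smul_coe_mul_of_coe_commutator hab)
    (Matrix.SpecialLinearGroup.coe_mul_eq_smul_coe_mul_of_coe_commutator hab')
    (by simp) (by simp)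
  obtain ⟨g, l, hg⟩ := Matrix.SpecialLinearGroup.exists_coe_eq_smul hX
  exact ⟨g, Matrix.SpecialLinearGroup.mul_mul_inv_eq_of_semiconjBy_coe (hg ▸ hXa.smul_left l),
    Matrix.SpecialLinearGroup.mul_mul_inv_eq_of_semiconjBy_coe (hg ▸ hXb.smul_left l)⟩
end

section
/- Let n ≥ 2, let a, b ∈ SL(n,ℂ) and ζ ∈ ℂ with a b a⁻¹ b⁻¹ = ζ·I. If the centralizer of {a,b} in SL(n,ℂ) equals the center of SL(n,ℂ) (i.e. every element of SL(n,ℂ) commuting with a and b is a scalar matrix ω·I with ωⁿ = 1), then ζ is a primitive n-th root of unity. -/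
/-!
Let `d` be the order of `ζ`, finite since `ζ ^ n = det (ζ • 1) = 1`. Conjugation by `a` scales
`a ^ i * b ^ j` by `ζ ^ j` and conjugation by `b⁻¹` scales it by `ζ ^ i`. Hence `a ^ d` and `b ^ d`
commute with `a` and `b`, so are scalar, and `a ^ i * b ^ j` is traceless for `0 ≤ i, j < d` unless
`i = j = 0`.
The twirl `T = ∑_{i,j<d} Ad (a ^ i * b ^ j)` is therefore invariant under `Ad a` and `Ad b`, so it
takes values in the commutant of `{a, b}`, i.e. in the scalars; comparing traces,
`T X = (d² / n) tr X • 1`, and `T` has operator trace `d²`. On the other hand `Ad g` has operator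
trace `tr g * tr g⁻¹`, so only the term `i = j = 0` contributes and `T` has operator trace `n²`.

That the whole matrix commutant of `{a, b}` is scalar, and not only its intersection with `SL n ℂ`,
holds because every matrix is a scalar plus a multiple of an element of `SL n ℂ`.
-/

open Matrix Finset

theorem mul_geom_sum_eq_self_of_pow_eq_one {R : Type*} [Ring R] {x : R} {d : ℕ} (h : x ^ d = 1) :
    x * ∑ i ∈ range d, x ^ i = ∑ i ∈ range d, x ^ i := by
  rw [← sub_eq_zero, ← sub_one_mul, mul_geom_sum, h, sub_self]

theorem Subalgebra.mem_bot_of_centralizer_pair_eq_bot {R A : Type*} [CommSemiring R] [Semiring A]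
    [Algebra R A] {x y z : A} (hcent : Subalgebra.centralizer R {x, y} = ⊥)
    (hx : Commute x z) (hy : Commute y z) : z ∈ (⊥ : Subalgebra R A) := by
  rw [← hcent, Subalgebra.mem_centralizer_iff]
  simpa using ⟨hx.eq, hy.eq⟩

namespace Units

section ConjEnd

variable (R : Type*) {A : Type*} [CommSemiring R] [Semiring A] [Algebra R A]

def conjEnd : Aˣ →* Module.End R A where
  toFun u := LinearMap.mulLeft R (u : A) ∘ₗ LinearMap.mulRight R (↑u⁻¹ : A)
  map_one' := by ext; simp
  map_mul' u v := by ext; simp [mul_assoc]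

variable {R}

@[simp]
theorem conjEnd_apply (u : Aˣ) (x : A) : conjEnd R u x = u * x * ↑u⁻¹ := by
  simp [conjEnd, mul_assoc]

theorem conjEnd_apply_mul (u : Aˣ) (x y : A) :
    conjEnd R u (x * y) = conjEnd R u x * conjEnd R u y := by
  simp [mul_assoc]

theorem conjEnd_apply_pow (u : Aˣ) (x : A) (k : ℕ) :
    conjEnd R u (x ^ k) = conjEnd R u x ^ k := by
  simp [conj_pow]

theorem conjEnd_apply_eq_self_iff (u : Aˣ) (x : A) : conjEnd R u x = x ↔ Commute (u : A) x := by
  rw [conjEnd_apply, mul_inv_eq_iff_eq_mul]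
  rfl

theorem conjEnd_eq_one_of_mem_bot {u : Aˣ} (hu : (u : A) ∈ (⊥ : Subalgebra R A)) :
    conjEnd R u = 1 := by
  obtain ⟨r, hr⟩ := Algebra.mem_bot.mp hu
  ext x
  rw [Module.End.one_apply, conjEnd_apply_eq_self_iff, ← hr]
  exact Algebra.commutes r x

theorem conjEnd_eq_of_val_eq_smul {u v : Aˣ} {c : R} (h : (u : A) = c • (v : A)) :
    conjEnd R u = conjEnd R v := by
  have hvu : ((v⁻¹ * u : Aˣ) : A) ∈ (⊥ : Subalgebra R A) := by
    rw [val_mul, h, mul_smul_comm, inv_mul]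
    exact Subalgebra.smul_mem _ (one_mem _) c
  calc conjEnd R u = conjEnd R v * conjEnd R (v⁻¹ * u) := by
        rw [← map_mul, _root_.mul_inv_cancel_left]
    _ = conjEnd R v := by rw [conjEnd_eq_one_of_mem_bot hvu, mul_one]

end ConjEnd

section Twirl

variable (R : Type*) {A : Type*} [CommRing R] [Ring A] [Algebra R A] (a b : Aˣ) (d : ℕ)

def twirl : Module.End R A :=
  (∑ i ∈ range d, conjEnd R a ^ i) * ∑ j ∈ range d, conjEnd R b ^ j

theorem twirl_eq_sum :
    twirl R a b d = ∑ i ∈ range d, ∑ j ∈ range d, conjEnd R (a ^ i * b ^ j) := by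
  simp [twirl, sum_mul_sum]

variable {R a b d} {ζ : R} (hab : (a : A) * b = ζ • ((b : A) * a))
include hab

theorem conjEnd_apply_pow_mul_pow (i j : ℕ) :
    conjEnd R a ((a : A) ^ i * (b : A) ^ j) = ζ ^ j • ((a : A) ^ i * (b : A) ^ j) := by
  have haa : conjEnd R a a = a := (conjEnd_apply_eq_self_iff a _).mpr (Commute.refl _)
  have hab_conj : conjEnd R a b = ζ • b := by
    rw [conjEnd_apply, hab, smul_mul_assoc, mul_inv_cancel_right]
  rw [conjEnd_apply_mul, conjEnd_apply_pow, conjEnd_apply_pow, haa, hab_conj, smul_pow,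
    mul_smul_comm]

theorem conjEnd_inv_apply_pow_mul_pow (i j : ℕ) :
    conjEnd R b⁻¹ ((a : A) ^ i * (b : A) ^ j) = ζ ^ i • ((a : A) ^ i * (b : A) ^ j) := by
  have hbb : conjEnd R b⁻¹ b = b :=
    (conjEnd_apply_eq_self_iff b⁻¹ _).mpr (Commute.refl _).units_inv_left
  have hba : conjEnd R b⁻¹ a = ζ • a := by
    rw [conjEnd_apply, inv_inv, mul_assoc, hab, mul_smul_comm, inv_mul_cancel_left]
  rw [conjEnd_apply_mul, conjEnd_apply_pow, conjEnd_apply_pow, hba, hbb, smul_pow, smul_mul_assoc]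

theorem commute_conjEnd : Commute (conjEnd R a) (conjEnd R b) := by
  have hab_units : ((a * b : Aˣ) : A) = ζ • ((b * a : Aˣ) : A) := by rw [val_mul, val_mul, hab]
  rw [Commute, SemiconjBy, ← map_mul, ← map_mul, conjEnd_eq_of_val_eq_smul hab_units]

variable (hζ : ζ ^ d = 1) (hcent : Subalgebra.centralizer R {(a : A), (b : A)} = ⊥)
include hζ hcent

theorem conjEnd_pow_eq_one : conjEnd R a ^ d = 1 ∧ conjEnd R b ^ d = 1 := by
  have hcentral (u : Aˣ) (hau : Commute (a : A) u) (hbu : Commute (b : A) u) : conjEnd R u = 1 :=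
    conjEnd_eq_one_of_mem_bot (Subalgebra.mem_bot_of_centralizer_pair_eq_bot hcent hau hbu)
  rw [← map_pow, ← map_pow]
  refine ⟨hcentral _ ?_ ?_, hcentral _ ?_ ?_⟩ <;> rw [val_pow_eq_pow_val]
  · exact (Commute.refl _).pow_right d
  · rw [← Commute.units_inv_left_iff, ← conjEnd_apply_eq_self_iff (R := R)]
    simpa [hζ] using conjEnd_inv_apply_pow_mul_pow hab d 0
  · rw [← conjEnd_apply_eq_self_iff (R := R)]
    simpa [hζ] using conjEnd_apply_pow_mul_pow hab 0 d
  · exact (Commute.refl _).pow_right d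

theorem twirl_apply_mem_bot (x : A) : twirl R a b d x ∈ (⊥ : Subalgebra R A) := by
  obtain ⟨had, hbd⟩ := conjEnd_pow_eq_one hab hζ hcent
  have hα : conjEnd R a * twirl R a b d = twirl R a b d := by
    rw [twirl, ← mul_assoc, mul_geom_sum_eq_self_of_pow_eq_one had]
  have hβ : conjEnd R b * twirl R a b d = twirl R a b d := by
    have hβα : Commute (conjEnd R b) (∑ i ∈ range d, conjEnd R a ^ i) :=
      Commute.sum_right _ _ _ fun i _ ↦ (commute_conjEnd hab).symm.pow_right i
    rw [twirl, ← mul_assoc, hβα.eq, mul_assoc, mul_geom_sum_eq_self_of_pow_eq_one hbd]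
  refine Subalgebra.mem_bot_of_centralizer_pair_eq_bot hcent ?_ ?_
  · rw [← conjEnd_apply_eq_self_iff (R := R), ← Module.End.mul_apply, hα]
  · rw [← conjEnd_apply_eq_self_iff (R := R), ← Module.End.mul_apply, hβ]

end Twirl

end Units

open Units

section MatrixTwirl

variable {ι K : Type*} [Fintype ι] [DecidableEq ι]

theorem Matrix.trace_mulLeft_comp_mulRight [CommRing K] (M N : Matrix ι ι K) :
    LinearMap.trace K (Matrix ι ι K) (LinearMap.mulLeft K M ∘ₗ LinearMap.mulRight K N) =
      trace M * trace N := by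
  rw [LinearMap.trace_eq_matrix_trace K (stdBasis K ι ι), Matrix.trace, Fintype.sum_prod_type,
    Matrix.trace, Matrix.trace, sum_mul_sum]
  refine Fintype.sum_congr _ _ fun i ↦ Fintype.sum_congr _ _ fun j ↦ ?_
  rw [diag_apply, LinearMap.toMatrix_apply, stdBasis_eq_single]
  change (M * (single i j (1 : K) * N) : Matrix ι ι K) i j = _
  rw [mul_apply, sum_eq_single i
    (fun k _ hk ↦ by rw [single_mul_apply_of_ne _ _ _ _ _ hk, mul_zero]) (by simp)]
  simp

theorem Matrix.trace_conjEnd [CommRing K] (u : GL ι K) :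
    LinearMap.trace K (Matrix ι ι K) (conjEnd K u) =
      trace (u : Matrix ι ι K) * trace ((u⁻¹ : GL ι K) : Matrix ι ι K) :=
  trace_mulLeft_comp_mulRight _ _

theorem Matrix.trace_eq_zero_of_conjEnd_apply_eq_smul [Field K] {u : GL ι K} {X : Matrix ι ι K}
    {c : K} (h : conjEnd K u X = c • X) (hc : c ≠ 1) : trace X = 0 := by
  have htr := congrArg trace h
  rw [conjEnd_apply, trace_units_conj, trace_smul, _root_.smul_eq_mul, eq_comm] at htr
  exact (mul_left_eq_self₀.mp htr).resolve_left hc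

theorem Matrix.trace_twirl_apply [CommRing K] (a b : GL ι K) (d : ℕ) (X : Matrix ι ι K) :
    trace (twirl K a b d X) = d ^ 2 * trace X := by
  rw [twirl_eq_sum]
  simp only [LinearMap.sum_apply, trace_sum, conjEnd_apply, trace_units_conj,
    sum_const, card_range, nsmul_eq_mul]
  ring

variable [Field K] {a b : GL ι K} {d : ℕ} {ζ : K}
  (hab : (a : Matrix ι ι K) * b = ζ • ((b : Matrix ι ι K) * a))
include hab

theorem Matrix.trace_twirl (hζ : IsPrimitiveRoot ζ d) (hd : 0 < d) :
    LinearMap.trace K (Matrix ι ι K) (twirl K a b d) = Fintype.card ι ^ 2 := by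
  have hvanish : ∀ i < d, ∀ j < d, i ≠ 0 ∨ j ≠ 0 →
      trace ((a ^ i * b ^ j : GL ι K) : Matrix ι ι K) = 0 := by
    rintro i hi j hj (hi0 | hj0) <;> rw [Units.val_mul, Units.val_pow_eq_pow_val,
      Units.val_pow_eq_pow_val]
    · exact trace_eq_zero_of_conjEnd_apply_eq_smul (conjEnd_inv_apply_pow_mul_pow hab i j)
        (hζ.pow_ne_one_of_pos_of_lt hi0 hi)
    · exact trace_eq_zero_of_conjEnd_apply_eq_smul (conjEnd_apply_pow_mul_pow hab i j)
        (hζ.pow_ne_one_of_pos_of_lt hj0 hj)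
  simp only [twirl_eq_sum, map_sum, trace_conjEnd]
  rw [sum_eq_single 0 (fun i hi hi0 ↦ sum_eq_zero fun j hj ↦ by
      rw [hvanish i (mem_range.mp hi) j (mem_range.mp hj) (.inl hi0), zero_mul]) (by simp [hd]),
    sum_eq_single 0 (fun j hj hj0 ↦ by rw [hvanish 0 hd j (mem_range.mp hj) (.inr hj0), zero_mul])
      (by simp [hd])]
  simp [sq]

theorem Matrix.eq_card_of_centralizer_eq_bot [CharZero K] [Nonempty ι] (hζ : IsPrimitiveRoot ζ d)
    (hd : 0 < d) (hcent : Subalgebra.centralizer K {(a : Matrix ι ι K), (b : Matrix ι ι K)} = ⊥) :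
    d = Fintype.card ι := by
  have hn : (Fintype.card ι : K) ≠ 0 := Nat.cast_ne_zero.mpr Fintype.card_ne_zero
  have hT : twirl K a b d =
      LinearMap.smulRight (traceLinearMap ι K K) (((d : K) ^ 2 / Fintype.card ι) • 1) := by
    refine LinearMap.ext fun X ↦ ?_
    obtain ⟨c, hc⟩ := Algebra.mem_bot.mp (twirl_apply_mem_bot hab hζ.pow_eq_one hcent X)
    have htr := trace_twirl_apply a b d X
    rw [← hc, Algebra.algebraMap_eq_smul_one, trace_smul, trace_one, _root_.smul_eq_mul] at htr
    rw [LinearMap.smulRight_apply, traceLinearMap_apply, ← hc, smul_smul,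
      Algebra.algebraMap_eq_smul_one]
    congr 1
    field_simp
    linear_combination htr
  have h := trace_twirl hab hζ hd
  rw [hT, LinearMap.trace_smulRight, traceLinearMap_apply, trace_smul, trace_one,
    _root_.smul_eq_mul, div_mul_cancel₀ _ hn] at h
  exact Nat.pow_left_injective two_ne_zero (by exact_mod_cast h)

end MatrixTwirl

theorem Matrix.SpecialLinearGroup.subalgebra_eq_bot_of_forall_mem_bot {ι K : Type*} [Fintype ι]
    [DecidableEq ι] [Nonempty ι] [Field K] [IsAlgClosed K] (S : Subalgebra K (Matrix ι ι K))
    (hS : ∀ g : SpecialLinearGroup ι K, (g : Matrix ι ι K) ∈ S →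
      (g : Matrix ι ι K) ∈ (⊥ : Subalgebra K (Matrix ι ι K))) :
    S = ⊥ := by
  refine eq_bot_iff.mpr fun X hX ↦ ?_
  obtain ⟨t, ht⟩ := (finite_spectrum (-X)).infinite_compl.nonempty
  set Y := algebraMap K (Matrix ι ι K) t + X
  have hY : Y.det ≠ 0 := by
    have := spectrum.notMem_iff.mp ht
    rw [sub_neg_eq_add, isUnit_iff_isUnit_det] at this
    exact this.ne_zero
  obtain ⟨δ, hδ⟩ := IsAlgClosed.exists_pow_nat_eq Y.det (Fintype.card_pos (α := ι))
  have hδ0 : δ ≠ 0 := by rintro rfl; exact hY (by rw [← hδ, zero_pow Fintype.card_ne_zero])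
  let g : SpecialLinearGroup ι K :=
    ⟨δ⁻¹ • Y, by rw [det_smul, ← hδ, inv_pow, inv_mul_cancel₀ (pow_ne_zero _ hδ0)]⟩
  have hg : δ⁻¹ • Y ∈ (⊥ : Subalgebra K (Matrix ι ι K)) :=
    hS g (S.smul_mem (S.add_mem (S.algebraMap_mem t) hX) δ⁻¹)
  have hYbot : Y ∈ (⊥ : Subalgebra K (Matrix ι ι K)) := by
    simpa [smul_smul, hδ0] using Subalgebra.smul_mem _ hg δ
  simpa [Y] using Subalgebra.sub_mem _ hYbot (Subalgebra.algebraMap_mem _ t)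

/-- Let `n ≥ 2` and `a, b ∈ SL(n,ℂ)` with `a b a⁻¹ b⁻¹ = ζ·I`. If the centralizer of
`{a,b}` in `SL(n,ℂ)` equals the center, then `ζ` is a primitive `n`-th root of unity. -/
theorem irreducible_pair_commutator_primitive_SL
    (n : ℕ) (hn : 2 ≤ n) (ζ : ℂ)
    (a b : Matrix.SpecialLinearGroup (Fin n) ℂ)
    (hab : ((a * b * a⁻¹ * b⁻¹ : Matrix.SpecialLinearGroup (Fin n) ℂ) :
        Matrix (Fin n) (Fin n) ℂ) = ζ • (1 : Matrix (Fin n) (Fin n) ℂ))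
    (hirr : ∀ g : Matrix.SpecialLinearGroup (Fin n) ℂ,
        g * a = a * g → g * b = b * g →
        ∃ ω : ℂ, ω ^ n = 1 ∧
          (g : Matrix (Fin n) (Fin n) ℂ) = ω • (1 : Matrix (Fin n) (Fin n) ℂ)) :
    IsPrimitiveRoot ζ n := by
  have : Nonempty (Fin n) := ⟨⟨0, by omega⟩⟩
  have hζn : ζ ^ n = 1 := by
    simpa [hab, det_smul] using (a * b * a⁻¹ * b⁻¹).det_coe
  have hcent : Subalgebra.centralizer ℂ {(a : Matrix (Fin n) (Fin n) ℂ), ↑b} = ⊥ := by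
    refine Matrix.SpecialLinearGroup.subalgebra_eq_bot_of_forall_mem_bot _ fun g hg ↦ ?_
    simp only [Subalgebra.mem_centralizer_iff, Set.mem_insert_iff, Set.mem_singleton_iff,
      forall_eq_or_imp, forall_eq] at hg
    obtain ⟨ω, -, hω⟩ := hirr g (Subtype.ext hg.1.symm) (Subtype.ext hg.2.symm)
    rw [hω, ← Algebra.algebraMap_eq_smul_one]
    exact Subalgebra.algebraMap_mem _ ω
  have hab' : (a : Matrix (Fin n) (Fin n) ℂ) * b = ζ • ((b : Matrix (Fin n) (Fin n) ℂ) * a) := by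
    have hconj : a * b = (a * b * a⁻¹ * b⁻¹) * (b * a) := by group
    rw [← Matrix.SpecialLinearGroup.coe_mul, ← Matrix.SpecialLinearGroup.coe_mul, hconj,
      Matrix.SpecialLinearGroup.coe_mul (a * b * a⁻¹ * b⁻¹), hab, smul_mul_assoc, one_mul]
  have hord := eq_card_of_centralizer_eq_bot (a := Matrix.SpecialLinearGroup.toGL a)
    (b := Matrix.SpecialLinearGroup.toGL b) hab' (IsPrimitiveRoot.orderOf ζ)
    (orderOf_pos_iff.mpr (isOfFinOrder_iff_pow_eq_one.mpr ⟨n, by omega, hζn⟩)) hcent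
  rw [Fintype.card_fin] at hord
  exact hord ▸ IsPrimitiveRoot.orderOf ζ
end

section
/- Let n ≥ 2 and let ζ ∈ ℂ be a primitive n-th root of unity. If (a,b) and (a',b') are pairs of elements of GL(n,ℂ) with a b a⁻¹ b⁻¹ = ζ·I and a' b' a'⁻¹ b'⁻¹ = ζ·I, then there exist g ∈ GL(n,ℂ) and scalars λ, μ ∈ ℂˣ such that g a g⁻¹ = λ·a' and g b g⁻¹ = μ·b'. -/
/-!
The relation reads `A B = ζ B A`, so `A` and `Bⁿ` commute and have a common eigenvector
`v`; rescaling `B` by an `n`-th root of its eigenvalue on `v` we may assume `Bⁿ v = v`. The vectors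
`Bⁱ v`, `0 ≤ i < n`, are eigenvectors of `A` for the distinct eigenvalues `μ ζⁱ`, hence a basis,
in which `A` is diagonal (clock) and `B` permutes cyclically (shift) up to scalars. Two pairs with
the same `ζ` therefore have the same normal form, and the change of basis conjugates one into
the other.
-/

open Module

theorem mul_pow_of_mul_eq_smul_mul {R M : Type*} [CommSemiring R] [Semiring M] [Algebra R M]
    {a b : M} {ζ : R} (h : a * b = ζ • (b * a)) (k : ℕ) : a * b ^ k = ζ ^ k • (b ^ k * a) := by
  have hsemi : SemiconjBy a b (ζ • b) := by rw [SemiconjBy, h, smul_mul_assoc]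
  rw [← smul_mul_assoc, ← smul_pow]
  exact hsemi.pow_right k

theorem Units.mul_eq_smul_mul_of_commutator_eq {R M : Type*} [CommSemiring R] [Semiring M]
    [Algebra R M] {a b : Mˣ} {ζ : R} (h : ((a * b * a⁻¹ * b⁻¹ : Mˣ) : M) = ζ • 1) :
    (a * b : M) = ζ • (b * a) := by
  rw [← smul_one_mul, ← h, ← Units.val_mul, ← Units.val_mul, ← Units.val_mul]
  group

namespace Module.End

variable {K V : Type*} [Field K] [AddCommGroup V] [Module K V]

theorem exists_common_eigenvector [IsAlgClosed K] [FiniteDimensional K V] [Nontrivial V]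
    {f g : End K V} (h : Commute f g) :
    ∃ v : V, v ≠ 0 ∧ ∃ μ ν : K, f v = μ • v ∧ g v = ν • v := by
  obtain ⟨μ, hμ⟩ := f.exists_eigenvalue
  have hg : ∀ x ∈ f.eigenspace μ, g x ∈ f.eigenspace μ := mapsTo_genEigenspace_of_comm h μ 1
  have : Nontrivial (f.eigenspace μ) := Submodule.nontrivial_iff_ne_bot.mpr hμ
  obtain ⟨ν, hν⟩ := exists_eigenvalue (g.restrict hg)
  obtain ⟨w, hw, hw0⟩ := hν.exists_hasEigenvector
  refine ⟨w, by simpa using hw0, μ, ν, mem_eigenspace_iff.mp w.2, ?_⟩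
  simpa using congr_arg Subtype.val (mem_eigenspace_iff.mp hw)

theorem ne_zero_of_apply_eq_smul {f : End K V} (hf : Function.Injective f) {v : V} (hv : v ≠ 0)
    {μ : K} (h : f v = μ • v) : μ ≠ 0 := by
  rintro rfl
  exact hv (hf (by rw [h, zero_smul, map_zero]))

variable {n : ℕ} {ζ : K} {A B : End K V}

theorem exists_basis_of_pow_apply_eq_self [NeZero n] (hV : finrank K V = n)
    (hζ : IsPrimitiveRoot ζ n) (hAB : A * B = ζ • (B * A)) {v : V} (hv : v ≠ 0) {μ : K}
    (hμ : μ ≠ 0) (hAv : A v = μ • v) (hBv : (B ^ n) v = v) :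
    ∃ e : Basis (Fin n) K V, ∀ i, A (e i) = (μ * ζ ^ (i : ℕ)) • e i ∧ B (e i) = e (i + 1) := by
  set w : ℕ → V := fun k => (B ^ k) v with hw
  have hw_periodic : Function.Periodic w n := fun k => by
    simp only [hw, pow_add, mul_apply, hBv]
  have hAw : ∀ k, A (w k) = (μ * ζ ^ k) • w k := fun k => by
    simp only [hw, ← mul_apply, mul_pow_of_mul_eq_smul_mul hAB k]
    rw [LinearMap.smul_apply, mul_apply, hAv, map_smul, smul_smul, mul_comm]
  have hw_ne : ∀ i : Fin n, w i ≠ 0 := fun i hi => hv <| by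
    rw [← hBv, ← pow_sub_mul_pow B i.2.le, mul_apply]
    exact (congrArg _ hi).trans (map_zero _)
  have hinj : Function.Injective fun i : Fin n => μ * ζ ^ (i : ℕ) := fun i j hij =>
    Fin.ext (hζ.pow_inj i.2 j.2 (mul_left_cancel₀ hμ hij))
  have hli := A.eigenvectors_linearIndependent' _ hinj (fun i : Fin n => w i)
    fun i => ⟨mem_eigenspace_iff.mpr (hAw i), hw_ne i⟩
  refine ⟨basisOfLinearIndependentOfCardEqFinrank hli (by simp [hV]), fun i => ?_⟩
  simp only [coe_basisOfLinearIndependentOfCardEqFinrank]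
  refine ⟨hAw i, ?_⟩
  rw [Fin.val_add, Fin.val_one', Nat.add_mod_mod, hw_periodic.map_mod_nat]
  simp only [hw, pow_succ', mul_apply]

theorem exists_basis_clock_shift [IsAlgClosed K] [NeZero n] (hV : finrank K V = n)
    (hζ : IsPrimitiveRoot ζ n) (hA : Function.Injective A) (hB : Function.Injective B)
    (hAB : A * B = ζ • (B * A)) :
    ∃ (e : Basis (Fin n) K V) (μ d : K), μ ≠ 0 ∧ d ≠ 0 ∧
      ∀ i, A (e i) = (μ * ζ ^ (i : ℕ)) • e i ∧ B (e i) = d • e (i + 1) := by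
  have hV_pos : 0 < finrank K V := hV ▸ NeZero.pos n
  have : FiniteDimensional K V := Module.finite_of_finrank_pos hV_pos
  have : Nontrivial V := Module.nontrivial_of_finrank_pos hV_pos
  have hcomm : Commute A (B ^ n) := by
    have h := mul_pow_of_mul_eq_smul_mul hAB n
    rwa [hζ.pow_eq_one, one_smul] at h
  obtain ⟨v, hv, μ, r, hAv, hBv⟩ := exists_common_eigenvector hcomm
  have hμ : μ ≠ 0 := ne_zero_of_apply_eq_smul hA hv hAv
  have hr : r ≠ 0 := ne_zero_of_apply_eq_smul (by simpa only [coe_pow] using hB.iterate n) hv hBv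
  obtain ⟨d, hd⟩ := IsAlgClosed.exists_pow_nat_eq r (NeZero.pos n)
  have hd0 : d ≠ 0 := by
    rintro rfl
    exact hr (by rw [← hd, zero_pow (NeZero.ne n)])
  obtain ⟨e, he⟩ := exists_basis_of_pow_apply_eq_self hV hζ (B := d⁻¹ • B)
    (by rw [mul_smul_comm, smul_mul_assoc, hAB, smul_comm]) hv hμ hAv
    (by rw [smul_pow, LinearMap.smul_apply, hBv, smul_smul, inv_pow, hd, inv_mul_cancel₀ hr,
      one_smul])
  refine ⟨e, μ, d, hμ, hd0, fun i => ⟨(he i).1, ?_⟩⟩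
  rw [← (he i).2, LinearMap.smul_apply, smul_smul, mul_inv_cancel₀ hd0, one_smul]

theorem exists_linearEquiv_conj_eq_smul [IsAlgClosed K] [NeZero n] {V' : Type*}
    [AddCommGroup V'] [Module K V'] (hV : finrank K V = n) (hV' : finrank K V' = n)
    (hζ : IsPrimitiveRoot ζ n) (hA : Function.Injective A) (hB : Function.Injective B)
    (hAB : A * B = ζ • (B * A)) {A' B' : End K V'} (hA' : Function.Injective A')
    (hB' : Function.Injective B') (hAB' : A' * B' = ζ • (B' * A')) :
    ∃ (φ : V ≃ₗ[K] V') (c c' : K), c ≠ 0 ∧ c' ≠ 0 ∧ φ.conj A = c • A' ∧ φ.conj B = c' • B' := by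
  obtain ⟨e, μ, d, hμ, hd, he⟩ := exists_basis_clock_shift hV hζ hA hB hAB
  obtain ⟨e', μ', d', hμ', hd', he'⟩ := exists_basis_clock_shift hV' hζ hA' hB' hAB'
  refine ⟨e.equiv e' (Equiv.refl _), μ / μ', d / d', div_ne_zero hμ hμ', div_ne_zero hd hd',
    e'.ext fun i => ?_, e'.ext fun i => ?_⟩
  · simp only [LinearEquiv.conj_apply, Basis.equiv_symm, Equiv.refl_symm, LinearMap.coe_comp,
      LinearEquiv.coe_coe, Function.comp_apply, Basis.equiv_apply, Equiv.refl_apply, (he i).1,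
      map_smul, LinearMap.smul_apply, (he' i).1, smul_smul]
    rw [← mul_assoc, div_mul_cancel₀ μ hμ']
  · simp only [LinearEquiv.conj_apply, Basis.equiv_symm, Equiv.refl_symm, LinearMap.coe_comp,
      LinearEquiv.coe_coe, Function.comp_apply, Basis.equiv_apply, Equiv.refl_apply, (he i).2,
      map_smul, LinearMap.smul_apply, (he' i).2, smul_smul]
    rw [div_mul_cancel₀ d hd']

end Module.End

namespace Matrix.GeneralLinearGroup

variable {n K : Type*} [Fintype n] [DecidableEq n] [Field K]

theorem injective_toLinAlgEquiv' (a : GL n K) :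
    Function.Injective (Matrix.toLinAlgEquiv' (a : Matrix n n K)) :=
  ((Module.End.isUnit_iff _).mp (a.isUnit.map Matrix.toLinAlgEquiv')).injective

theorem exists_toLinAlgEquiv'_conj (φ : (n → K) ≃ₗ[K] (n → K)) :
    ∃ g : GL n K, ∀ a : GL n K,
      Matrix.toLinAlgEquiv' ((g * a * g⁻¹ : GL n K) : Matrix n n K) =
        φ.conj (Matrix.toLinAlgEquiv' (a : Matrix n n K)) := by
  refine ⟨toLin.symm (LinearMap.GeneralLinearGroup.ofLinearEquiv φ), fun a => ?_⟩
  change ((toLin _ : LinearMap.GeneralLinearGroup K (n → K)) : Module.End K (n → K)) =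
    φ.conj (toLin a : LinearMap.GeneralLinearGroup K (n → K))
  rw [map_mul, map_mul, map_inv, MulEquiv.apply_symm_apply]
  rfl

end Matrix.GeneralLinearGroup

theorem pairs_with_commutator_primitive_root_projectively_conjugate_GL_general
    (n : ℕ) (ζ : ℂ) (hζ : IsPrimitiveRoot ζ n)
    (a b a' b' : GL (Fin n) ℂ)
    (hab : ((a * b * a⁻¹ * b⁻¹ : GL (Fin n) ℂ) : Matrix (Fin n) (Fin n) ℂ)
        = ζ • (1 : Matrix (Fin n) (Fin n) ℂ))
    (hab' : ((a' * b' * a'⁻¹ * b'⁻¹ : GL (Fin n) ℂ) : Matrix (Fin n) (Fin n) ℂ)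
        = ζ • (1 : Matrix (Fin n) (Fin n) ℂ)) :
    ∃ (g : GL (Fin n) ℂ) (lam mu : ℂˣ),
      ((g * a * g⁻¹ : GL (Fin n) ℂ) : Matrix (Fin n) (Fin n) ℂ)
        = (lam : ℂ) • (a' : Matrix (Fin n) (Fin n) ℂ) ∧
      ((g * b * g⁻¹ : GL (Fin n) ℂ) : Matrix (Fin n) (Fin n) ℂ)
        = (mu : ℂ) • (b' : Matrix (Fin n) (Fin n) ℂ) := by
  rcases Nat.eq_zero_or_pos n with rfl | hn
  · exact ⟨1, 1, 1, Subsingleton.elim _ _, Subsingleton.elim _ _⟩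
  have : NeZero n := ⟨hn.ne'⟩
  have hAB := congrArg Matrix.toLinAlgEquiv' (Units.mul_eq_smul_mul_of_commutator_eq hab)
  have hAB' := congrArg Matrix.toLinAlgEquiv' (Units.mul_eq_smul_mul_of_commutator_eq hab')
  simp only [map_mul, map_smul] at hAB hAB'
  obtain ⟨φ, c, c', hc, hc', hφa, hφb⟩ := Module.End.exists_linearEquiv_conj_eq_smul
    (Module.finrank_fin_fun ℂ) (Module.finrank_fin_fun ℂ) hζ
    (Matrix.GeneralLinearGroup.injective_toLinAlgEquiv' a)
    (Matrix.GeneralLinearGroup.injective_toLinAlgEquiv' b) hAB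
    (Matrix.GeneralLinearGroup.injective_toLinAlgEquiv' a')
    (Matrix.GeneralLinearGroup.injective_toLinAlgEquiv' b') hAB'
  obtain ⟨g, hg⟩ := Matrix.GeneralLinearGroup.exists_toLinAlgEquiv'_conj φ
  refine ⟨g, Units.mk0 c hc, Units.mk0 c' hc', Matrix.toLinAlgEquiv'.injective ?_,
    Matrix.toLinAlgEquiv'.injective ?_⟩
  · rw [hg, hφa, map_smul, Units.val_mk0]
  · rw [hg, hφb, map_smul, Units.val_mk0]

/-- For `n ≥ 2` and `ζ` a primitive `n`-th root of unity, any two pairs in `GL(n,ℂ)`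
with commutator `ζ·I` are conjugate up to scalar factors. -/
theorem pairs_with_commutator_primitive_root_projectively_conjugate_GL
    (n : ℕ) (hn : 2 ≤ n) (ζ : ℂ) (hζ : IsPrimitiveRoot ζ n)
    (a b a' b' : GL (Fin n) ℂ)
    (hab : ((a * b * a⁻¹ * b⁻¹ : GL (Fin n) ℂ) : Matrix (Fin n) (Fin n) ℂ)
        = ζ • (1 : Matrix (Fin n) (Fin n) ℂ))
    (hab' : ((a' * b' * a'⁻¹ * b'⁻¹ : GL (Fin n) ℂ) : Matrix (Fin n) (Fin n) ℂ)
        = ζ • (1 : Matrix (Fin n) (Fin n) ℂ)) :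
    ∃ (g : GL (Fin n) ℂ) (lam mu : ℂˣ),
      ((g * a * g⁻¹ : GL (Fin n) ℂ) : Matrix (Fin n) (Fin n) ℂ)
        = (lam : ℂ) • (a' : Matrix (Fin n) (Fin n) ℂ) ∧
      ((g * b * g⁻¹ : GL (Fin n) ℂ) : Matrix (Fin n) (Fin n) ℂ)
        = (mu : ℂ) • (b' : Matrix (Fin n) (Fin n) ℂ) :=
  pairs_with_commutator_primitive_root_projectively_conjugate_GL_general n ζ hζ a b a' b' hab hab'
end

section
/- Let ζ ∈ ℂ be a root of unity of exact order m, let n = h·m, and let a, b ∈ U(n) satisfy a b a⁻¹ b⁻¹ = ζ·I_n. Then there exist u ∈ U(n), diagonal unitary matrices d₁, d₂ ∈ U(h), and matrices P, Q ∈ U(m) with P Q P⁻¹ Q⁻¹ = ζ·I_m whose common centralizer in U(m) consists exactly of the unitary scalar matrices, such that u a u⁻¹ = d₁ ⊗ P and u b u⁻¹ = d₂ ⊗ Q, where ⊗ denotes the Kronecker product of matrices. -/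
/-!
Write `T, S` for `a, b` acting on `ℂⁿ`, so that `T S = ζ S T`. Since `S^m` commutes with `T`, the
two have a common unit eigenvector `u`, say `T u = μ u` and `S^m u = β^m u` with `|β| = 1`. The
vectors `β^{-j} S^j u`, `j < m`, are eigenvectors of `T` with the distinct eigenvalues `μ ζ^j`,
hence orthonormal; `S` permutes them cyclically up to the factor `β`. Their span is invariant
under `T` and `S`, hence so is its orthogonal complement, and induction on `h` produces an
orthonormal basis `e (i, j)` with `T e (i, j) = μᵢ ζ^j e (i, j)` and `S e (i, j) = βᵢ e (i, j + 1)`.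
In this basis `a` and `b` are `diag μ ⊗ clock` and `diag β ⊗ shift`; the clock and shift matrices
commute only with scalars because the `ζ^j` are distinct and the shift is a single `m`-cycle.
-/

open Module Matrix Kronecker
open scoped ComplexInnerProductSpace

lemma mul_pow_eq_smul_of_mul_eq_smul {K A : Type*} [Monoid K] [Monoid A] [MulAction K A]
    [IsScalarTower K A A] [SMulCommClass K A A] {a b : A} {c : K} (h : a * b = c • (b * a))
    (k : ℕ) : a * b ^ k = c ^ k • (b ^ k * a) := by
  have hab : SemiconjBy a b (c • b) := by rw [SemiconjBy, h, smul_mul_assoc]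
  rw [(hab.pow_right k).eq, smul_pow, smul_mul_assoc]

lemma Unitary.coe_commutator_eq_smul_one_iff {K R : Type*} [Monoid R] [StarMul R] [SMul K R]
    [IsScalarTower K R R] {u v : unitary R} {c : K} :
    ((u * v * u⁻¹ * v⁻¹ : unitary R) : R) = c • 1 ↔ (u * v : R) = c • (v * u : R) := by
  rw [← Unitary.mul_left_inj (v * u), ← MulMemClass.coe_mul, smul_one_mul,
    show u * v * u⁻¹ * v⁻¹ * (v * u) = u * v by group]
  simp only [MulMemClass.coe_mul]

lemma Unitary.coe_inv_mul_mul_inv_inv {R : Type*} [Monoid R] [StarMul R] (c x : unitary R) :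
    ((c⁻¹ * x * c⁻¹⁻¹ : unitary R) : R) = star (c : R) * x * c := by
  rw [inv_inv, ← Unitary.star_eq_inv]
  rfl

lemma pow_val_add_one {M : Type*} [Monoid M] {ζ : M} {m : ℕ} [NeZero m] (hζ : ζ ^ m = 1)
    (j : Fin m) : ζ ^ ((j + 1 : Fin m) : ℕ) = ζ ^ (j : ℕ) * ζ := by
  rw [Fin.val_add, ← pow_eq_pow_mod _ hζ, pow_add, Fin.val_one', ← pow_eq_pow_mod _ hζ, pow_one]

lemma Module.End.exists_common_eigenvector_s10 {K V : Type*} [Field K] [IsAlgClosed K]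
    [AddCommGroup V] [Module K V] [FiniteDimensional K V] [Nontrivial V] {f g : End K V}
    (h : Commute f g) : ∃ v : V, v ≠ 0 ∧ ∃ μ ν : K, f v = μ • v ∧ g v = ν • v := by
  obtain ⟨μ, hμ⟩ := f.exists_eigenvalue
  have : Nontrivial (f.eigenspace μ) := Submodule.nontrivial_iff_ne_bot.mpr hμ
  obtain ⟨ν, hν⟩ := End.exists_eigenvalue (g.restrict (End.mapsTo_genEigenspace_of_comm h μ 1))
  obtain ⟨⟨v, hvμ⟩, hvν⟩ := hν.exists_hasEigenvector
  refine ⟨v, fun hv => hvν.2 (Subtype.ext hv), μ, ν, End.mem_eigenspace_iff.mp hvμ, ?_⟩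
  exact congrArg Subtype.val hvν.apply_eq_smul

namespace Matrix

lemma diagonal_mem_unitaryGroup_s10 {n 𝕜 : Type*} [Fintype n] [DecidableEq n] [RCLike 𝕜]
    {d : n → 𝕜} (hd : ∀ i, ‖d i‖ = 1) : diagonal d ∈ unitaryGroup n 𝕜 := by
  rw [mem_unitaryGroup_iff', star_eq_conjTranspose, diagonal_conjTranspose,
    diagonal_mul_diagonal, ← diagonal_one]
  congr 1
  ext i
  simp [RCLike.conj_mul, hd i]

lemma permMatrix_mem_unitaryGroup_s10 {n 𝕜 : Type*} [Fintype n] [DecidableEq n] [RCLike 𝕜]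
    (σ : Equiv.Perm n) : σ.permMatrix 𝕜 ∈ unitaryGroup n 𝕜 := by
  rw [mem_unitaryGroup_iff', star_eq_conjTranspose, conjTranspose_permMatrix, ← permMatrix_mul,
    mul_inv_cancel, permMatrix_one]

def clock (m : ℕ) (ζ : ℂ) : Matrix (Fin m) (Fin m) ℂ := diagonal fun j => ζ ^ (j : ℕ)

def shift (m : ℕ) [NeZero m] : Matrix (Fin m) (Fin m) ℂ :=
  Equiv.Perm.permMatrix ℂ (Equiv.subRight (1 : Fin m))

variable {m : ℕ} {ζ : ℂ}

lemma shift_apply [NeZero m] (i j : Fin m) : shift m i j = if i = j + 1 then 1 else 0 := by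
  simp [shift, PEquiv.toMatrix_apply, sub_eq_iff_eq_add]

lemma clock_mem_unitaryGroup (hζ : ‖ζ‖ = 1) : clock m ζ ∈ unitaryGroup (Fin m) ℂ :=
  diagonal_mem_unitaryGroup_s10 fun j => by simp [hζ]

lemma shift_mem_unitaryGroup [NeZero m] : shift m ∈ unitaryGroup (Fin m) ℂ :=
  permMatrix_mem_unitaryGroup_s10 _

lemma clock_mul_shift [NeZero m] (hζ : ζ ^ m = 1) :
    clock m ζ * shift m = ζ • (shift m * clock m ζ) := by
  ext i j
  simp only [clock, diagonal_mul, mul_diagonal, smul_apply, shift_apply, smul_eq_mul]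
  split_ifs with h
  · rw [h, pow_val_add_one hζ]; ring
  · simp

lemma isDiag_of_mul_diagonal_eq {n R : Type*} [DecidableEq n] [Fintype n] [CommRing R]
    [NoZeroDivisors R] {g : Matrix n n R} {d : n → R} (hd : Function.Injective d)
    (h : g * diagonal d = diagonal d * g) : g.IsDiag := by
  intro i j hij
  have hij' : g i j * (d j - d i) = 0 := by
    have := congr_fun₂ h i j
    simp only [mul_diagonal, diagonal_mul] at this
    rw [mul_sub, this]; ring
  exact (mul_eq_zero.mp hij').resolve_right (sub_ne_zero.mpr (hd.ne (Ne.symm hij)))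

lemma diag_add_one_of_mul_shift_eq [NeZero m] {g : Matrix (Fin m) (Fin m) ℂ}
    (h : g * shift m = shift m * g) (j : Fin m) : g (j + 1) (j + 1) = g j j := by
  have := congr_fun₂ h (j + 1) j
  simpa [mul_apply, shift_apply] using this

open Fin.NatCast in
lemma exists_eq_smul_one_of_commute_clock_shift [NeZero m] (hζ : IsPrimitiveRoot ζ m)
    {g : Matrix (Fin m) (Fin m) ℂ} (hclock : g * clock m ζ = clock m ζ * g)
    (hshift : g * shift m = shift m * g) : ∃ ω : ℂ, g = ω • 1 := by
  have hdiag : g.IsDiag :=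
    isDiag_of_mul_diagonal_eq (fun i j hij => Fin.ext (hζ.pow_inj i.2 j.2 hij)) hclock
  have hconst : ∀ k : ℕ, g (k : Fin m) (k : Fin m) = g 0 0 := by
    intro k
    induction k with
    | zero => simp
    | succ k ih => rw [Nat.cast_succ, diag_add_one_of_mul_shift_eq hshift, ih]
  refine ⟨g 0 0, ext fun i j => ?_⟩
  rcases eq_or_ne i j with rfl | hij
  · simpa using hconst i
  · simp [hdiag hij, hij]

lemma commute_clock_shift_iff [NeZero m] (hζ : IsPrimitiveRoot ζ m)
    {g : Matrix (Fin m) (Fin m) ℂ} :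
    (g * clock m ζ = clock m ζ * g ∧ g * shift m = shift m * g) ↔ ∃ ω : ℂ, g = ω • 1 := by
  refine ⟨fun h => exists_eq_smul_one_of_commute_clock_shift hζ h.1 h.2, ?_⟩
  rintro ⟨ω, rfl⟩
  simp

variable {ι M : Type*} [Fintype ι] [DecidableEq ι] [AddCommMonoid M] [Module ℂ M]

lemma sum_diagonal_kronecker_clock_smul (μ : ι → ℂ) (e : ι × Fin m → M) (p : ι × Fin m) :
    ∑ q, (diagonal μ ⊗ₖ clock m ζ) q p • e q = (μ p.1 * ζ ^ (p.2 : ℕ)) • e p := by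
  rw [clock, diagonal_kronecker_diagonal]
  simp [diagonal_apply, ite_smul]

lemma sum_diagonal_kronecker_shift_smul [NeZero m] (β : ι → ℂ) (e : ι × Fin m → M)
    (p : ι × Fin m) :
    ∑ q, (diagonal β ⊗ₖ shift m) q p • e q = β p.1 • e (p.1, p.2 + 1) := by
  simp [Fintype.sum_prod_type, diagonal_apply, shift_apply, ite_smul]

end Matrix

section IsometricPair

variable {V : Type*} [NormedAddCommGroup V] [InnerProductSpace ℂ V] {T S : End ℂ V}

lemma norm_eq_one_of_apply_eq_smul (hT : ∀ x y, ⟪T x, T y⟫ = ⟪x, y⟫) {x : V} {α : ℂ}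
    (hx : T x = α • x) (hx0 : x ≠ 0) : ‖α‖ = 1 := by
  have h := (LinearMap.isometryOfInner T hT).norm_map x
  rw [LinearMap.coe_isometryOfInner, hx, norm_smul] at h
  exact (mul_eq_right₀ (norm_ne_zero_iff.mpr hx0)).mp h

lemma inner_eq_zero_of_apply_eq_smul (hT : ∀ x y, ⟪T x, T y⟫ = ⟪x, y⟫) {x y : V} {α γ : ℂ}
    (hx : T x = α • x) (hy : T y = γ • y) (hne : α ≠ γ) : ⟪x, y⟫ = 0 := by
  by_contra hxy
  have hx0 : x ≠ 0 := by rintro rfl; simp at hxy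
  have hα : α * (starRingEnd ℂ) α = 1 := by
    rw [RCLike.mul_conj, norm_eq_one_of_apply_eq_smul hT hx hx0]; simp
  have hαγ : (starRingEnd ℂ) α * γ = 1 := by
    have h := hT x y
    rw [hx, hy, inner_smul_left, inner_smul_right, ← mul_assoc] at h
    exact (mul_eq_right₀ hxy).mp h
  exact hne (by linear_combination γ * hα - α * hαγ)

lemma pow_inner_map_map (hS : ∀ x y, ⟪S x, S y⟫ = ⟪x, y⟫) (k : ℕ) (x y : V) :
    ⟪(S ^ k) x, (S ^ k) y⟫ = ⟪x, y⟫ := by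
  induction k with
  | zero => simp
  | succ k ih => rw [pow_succ', End.mul_apply, End.mul_apply, hS, ih]

lemma mapsTo_orthogonal [FiniteDimensional ℂ V] (hT : ∀ x y, ⟪T x, T y⟫ = ⟪x, y⟫)
    {W : Submodule ℂ V} (hW : Set.MapsTo T W W) : Set.MapsTo T Wᗮ Wᗮ := by
  have hsurj : Function.Surjective (T.restrict hW) := LinearMap.injective_iff_surjective.mp
    fun x y hxy =>
      Subtype.ext <| (LinearMap.isometryOfInner T hT).injective (congrArg Subtype.val hxy)
  intro x hx
  rw [SetLike.mem_coe, Submodule.mem_orthogonal]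
  intro y hy
  obtain ⟨z, hz⟩ := hsurj ⟨y, hy⟩
  rw [show y = T z from (congrArg Subtype.val hz).symm, hT]
  exact Submodule.inner_right_of_mem_orthogonal z.2 hx

variable {m : ℕ} [NeZero m] {ζ : ℂ}

structure IsClockShiftFamily {ι : Type*} (T S : End ℂ V) (ζ : ℂ) (e : ι × Fin m → V)
    (μ β : ι → ℂ) : Prop where
  orthonormal : Orthonormal ℂ e
  T_apply : ∀ i j, T (e (i, j)) = (μ i * ζ ^ (j : ℕ)) • e (i, j)
  S_apply : ∀ i j, S (e (i, j)) = β i • e (i, j + 1)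

namespace IsClockShiftFamily

variable {ι : Type*} {e : ι × Fin m → V} {μ β : ι → ℂ}

lemma norm_μ_eq_one (he : IsClockShiftFamily T S ζ e μ β) (hT : ∀ x y, ⟪T x, T y⟫ = ⟪x, y⟫)
    (i : ι) : ‖μ i‖ = 1 := by
  simpa using norm_eq_one_of_apply_eq_smul hT (he.T_apply i 0) (he.orthonormal.ne_zero _)

lemma norm_β_eq_one (he : IsClockShiftFamily T S ζ e μ β) (hS : ∀ x y, ⟪S x, S y⟫ = ⟪x, y⟫)
    (i : ι) : ‖β i‖ = 1 := by
  have h := (LinearMap.isometryOfInner S hS).norm_map (e (i, 0))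
  rwa [LinearMap.coe_isometryOfInner, he.S_apply, norm_smul, he.orthonormal.1, he.orthonormal.1,
    mul_one] at h

lemma mapsTo_span (he : IsClockShiftFamily T S ζ e μ β) :
    Set.MapsTo T (Submodule.span ℂ (Set.range e)) (Submodule.span ℂ (Set.range e)) ∧
      Set.MapsTo S (Submodule.span ℂ (Set.range e)) (Submodule.span ℂ (Set.range e)) := by
  have hmem (p) : e p ∈ Submodule.span ℂ (Set.range e) := Submodule.subset_span ⟨p, rfl⟩
  constructor
  · refine fun x hx => (Submodule.span_le (p := (Submodule.span ℂ _).comap T)).mpr ?_ hx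
    rintro _ ⟨⟨i, j⟩, rfl⟩
    simpa [he.T_apply] using Submodule.smul_mem _ _ (hmem (i, j))
  · refine fun x hx => (Submodule.span_le (p := (Submodule.span ℂ _).comap S)).mpr ?_ hx
    rintro _ ⟨⟨i, j⟩, rfl⟩
    simpa [he.S_apply] using Submodule.smul_mem _ _ (hmem (i, j + 1))

lemma map {W : Type*} [NormedAddCommGroup W] [InnerProductSpace ℂ W] {T' S' : End ℂ W}
    {e : ι × Fin m → W} (he : IsClockShiftFamily T' S' ζ e μ β) (L : W →ₗᵢ[ℂ] V)
    (hT : ∀ x, T (L x) = L (T' x)) (hS : ∀ x, S (L x) = L (S' x)) :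
    IsClockShiftFamily T S ζ (L ∘ e) μ β where
  orthonormal := he.orthonormal.comp_linearIsometry L
  T_apply i j := by simp [hT, he.T_apply]
  S_apply i j := by simp [hS, he.S_apply]

lemma append {h₁ h₂ : ℕ} {e₁ : Fin h₁ × Fin m → V} {e₂ : Fin h₂ × Fin m → V}
    {μ₁ β₁ : Fin h₁ → ℂ} {μ₂ β₂ : Fin h₂ → ℂ} (he₁ : IsClockShiftFamily T S ζ e₁ μ₁ β₁)
    (he₂ : IsClockShiftFamily T S ζ e₂ μ₂ β₂) (horth : ∀ p q, ⟪e₁ p, e₂ q⟫ = 0) :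
    IsClockShiftFamily T S ζ
      (fun p => Fin.append (fun i j => e₁ (i, j)) (fun i j => e₂ (i, j)) p.1 p.2)
      (Fin.append μ₁ μ₂) (Fin.append β₁ β₂) where
  orthonormal := by
    rw [orthonormal_iff_ite]
    rintro ⟨i, j⟩ ⟨k, l⟩
    induction i using Fin.addCases <;> induction k using Fin.addCases <;>
      simp [orthonormal_iff_ite.mp he₁.orthonormal, orthonormal_iff_ite.mp he₂.orthonormal,
        horth, inner_eq_zero_symm.mp (horth _ _), Fin.ext_iff] <;> omega
  T_apply i j := by
    induction i using Fin.addCases <;> simp [he₁.T_apply, he₂.T_apply]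
  S_apply i j := by
    induction i using Fin.addCases <;> simp [he₁.S_apply, he₂.S_apply]

end IsClockShiftFamily

lemma isClockShiftFamily_orbit (hζ : IsPrimitiveRoot ζ m) (hT : ∀ x y, ⟪T x, T y⟫ = ⟪x, y⟫)
    (hS : ∀ x y, ⟪S x, S y⟫ = ⟪x, y⟫) (hTS : T * S = ζ • (S * T)) {u : V} {μ β : ℂ}
    (hu : ‖u‖ = 1) (hTu : T u = μ • u) (hSu : (S ^ m) u = β ^ m • u) (hβ : ‖β‖ = 1) :
    IsClockShiftFamily T S ζ (fun p : Fin 1 × Fin m => β⁻¹ ^ (p.2 : ℕ) • (S ^ (p.2 : ℕ)) u)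
      (fun _ => μ) (fun _ => β) := by
  set g : ℕ → V := fun k => β⁻¹ ^ k • (S ^ k) u
  have hβ0 : β ≠ 0 := by rintro rfl; simp at hβ
  have hμ0 : μ ≠ 0 := by
    rintro rfl; simpa using norm_eq_one_of_apply_eq_smul hT hTu (norm_ne_zero_iff.mp (by simp [hu]))
  have hTg (k : ℕ) : T (g k) = (μ * ζ ^ k) • g k := by
    have h := LinearMap.congr_fun (mul_pow_eq_smul_of_mul_eq_smul hTS k) u
    simp only [End.mul_apply, LinearMap.smul_apply, hTu, map_smul] at h
    simp only [g, map_smul, h, smul_smul]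
    ring_nf
  have hSg (k : ℕ) : S (g k) = β • g (k + 1) := by
    simp only [g, map_smul, smul_smul, pow_succ' S, End.mul_apply]
    rw [pow_succ', ← mul_assoc, mul_inv_cancel₀ hβ0, one_mul]
  have hg : Function.Periodic g m := by
    intro k
    simp only [g, pow_add, End.mul_apply, hSu, map_smul, smul_smul]
    rw [mul_assoc, ← mul_pow, inv_mul_cancel₀ hβ0, one_pow, mul_one]
  have hnorm (k : ℕ) : ‖g k‖ = 1 := by
    have h := (LinearMap.isometryOfInner _ (pow_inner_map_map hS k)).norm_map u
    simp only [LinearMap.coe_isometryOfInner] at h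
    simp [g, norm_smul, hβ, h, hu]
  constructor
  · rw [orthonormal_iff_ite]
    rintro ⟨i, j⟩ ⟨k, l⟩
    obtain rfl : i = k := Subsingleton.elim _ _
    change ⟪g j, g l⟫ = if (i, j) = (i, l) then 1 else 0
    by_cases hjl : j = l
    · simp [hjl, inner_self_eq_norm_sq_to_K, hnorm l]
    · rw [if_neg (by simpa using hjl)]
      refine inner_eq_zero_of_apply_eq_smul hT (hTg j) (hTg l) fun h => hjl ?_
      exact Fin.ext (hζ.pow_inj j.2 l.2 (mul_left_cancel₀ hμ0 h))
  · exact fun _ j => hTg j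
  · intro _ j
    change S (g j) = β • g ((j + 1 : Fin m) : ℕ)
    rw [hSg, Fin.val_add, Fin.val_one', Nat.add_mod_mod, hg.map_mod_nat]

lemma exists_isClockShiftFamily_fin_one [FiniteDimensional ℂ V] [Nontrivial V]
    (hζ : IsPrimitiveRoot ζ m) (hT : ∀ x y, ⟪T x, T y⟫ = ⟪x, y⟫)
    (hS : ∀ x y, ⟪S x, S y⟫ = ⟪x, y⟫) (hTS : T * S = ζ • (S * T)) :
    ∃ (e : Fin 1 × Fin m → V) (μ β : Fin 1 → ℂ), IsClockShiftFamily T S ζ e μ β := by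
  have hcomm : Commute T (S ^ m) := by
    rw [commute_iff_eq, mul_pow_eq_smul_of_mul_eq_smul hTS m, hζ.pow_eq_one, one_smul]
  obtain ⟨v, hv0, μ, ν, hTv, hSv⟩ := End.exists_common_eigenvector_s10 hcomm
  obtain ⟨β, rfl⟩ := IsAlgClosed.exists_pow_nat_eq ν (NeZero.pos m)
  set u : V := (‖v‖⁻¹ : ℂ) • v
  have hu : ‖u‖ = 1 := norm_smul_inv_norm hv0
  have hTu : T u = μ • u := by simp [u, hTv, smul_comm μ]
  have hSu : (S ^ m) u = β ^ m • u := by simp [u, hSv, smul_comm (β ^ m)]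
  have hβ : ‖β‖ = 1 := by
    have h := norm_eq_one_of_apply_eq_smul (pow_inner_map_map hS m) hSu
      (norm_ne_zero_iff.mp (by simp [hu]))
    rwa [norm_pow, pow_eq_one_iff_of_nonneg (norm_nonneg _) (NeZero.ne m)] at h
  exact ⟨_, _, _, isClockShiftFamily_orbit hζ hT hS hTS hu hTu hSu hβ⟩

lemma exists_isClockShiftFamily [FiniteDimensional ℂ V] (hζ : IsPrimitiveRoot ζ m) {h : ℕ}
    (hdim : finrank ℂ V = h * m) (hT : ∀ x y, ⟪T x, T y⟫ = ⟪x, y⟫)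
    (hS : ∀ x y, ⟪S x, S y⟫ = ⟪x, y⟫) (hTS : T * S = ζ • (S * T)) :
    ∃ (e : Fin h × Fin m → V) (μ β : Fin h → ℂ), IsClockShiftFamily T S ζ e μ β := by
  induction h generalizing V with
  | zero =>
    exact ⟨fun p => p.1.elim0, Fin.elim0, Fin.elim0,
      ⟨⟨fun p => p.1.elim0, fun p => p.1.elim0⟩, fun i => i.elim0, fun i => i.elim0⟩⟩
  | succ h ih =>
    have : Nontrivial V :=
      Module.nontrivial_of_finrank_pos (by rw [hdim]; exact Nat.mul_pos h.succ_pos (NeZero.pos m))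
    obtain ⟨e₁, μ₁, β₁, he₁⟩ := exists_isClockShiftFamily_fin_one hζ hT hS hTS
    set W := Submodule.span ℂ (Set.range e₁)
    have hTW := mapsTo_orthogonal hT he₁.mapsTo_span.1
    have hSW := mapsTo_orthogonal hS he₁.mapsTo_span.2
    have hdimW : finrank ℂ Wᗮ = h * m := by
      have := W.finrank_add_finrank_orthogonal
      rw [finrank_span_eq_card he₁.orthonormal.linearIndependent, hdim] at this
      simp only [Fintype.card_prod, Fintype.card_fin, one_mul] at this
      linarith [add_one_mul h m]
    obtain ⟨e₂, μ₂, β₂, he₂⟩ := ih hdimW (T := T.restrict hTW) (S := S.restrict hSW)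
      (fun x y => hT x y) (fun x y => hS x y)
      (LinearMap.ext fun x => Subtype.ext (LinearMap.congr_fun hTS x))
    refine ⟨_, _, _, (he₂.map Wᗮ.subtypeₗᵢ (fun _ => rfl) (fun _ => rfl)).append he₁ ?_⟩
    exact fun p q => Submodule.inner_left_of_mem_orthogonal
      (Submodule.subset_span (Set.mem_range_self q)) (e₂ p).2

end IsometricPair

namespace Matrix

variable {n ι 𝕜 : Type*} [Fintype n] [DecidableEq n] [RCLike 𝕜]

lemma inner_toEuclideanLin_toEuclideanLin {A : Matrix n n 𝕜} (hA : A ∈ unitaryGroup n 𝕜)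
    (x y : EuclideanSpace 𝕜 n) : inner 𝕜 (toEuclideanLin A x) (toEuclideanLin A y) = inner 𝕜 x y :=
  (toEuclideanCLM (n := n) (𝕜 := 𝕜) A).inner_map_map_of_mem_unitary (Unitary.map_mem _ hA) x y

lemma toEuclideanLin_mul_eq_smul {A B : Matrix n n 𝕜} {c : 𝕜} (h : A * B = c • (B * A)) :
    toEuclideanLin A * toEuclideanLin B = c • (toEuclideanLin B * toEuclideanLin A) := by
  simpa [toLpLin_mul, Module.End.mul_eq_comp] using congrArg toEuclideanLin h

lemma mem_unitaryGroup_of_orthonormal (σ : n ≃ ι) {e : ι → EuclideanSpace 𝕜 n}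
    (he : Orthonormal 𝕜 e) : of (fun r s => e (σ s) r) ∈ unitaryGroup n 𝕜 := by
  classical
  rw [mem_unitaryGroup_iff']
  ext s t
  have h := orthonormal_iff_ite.mp he (σ s) (σ t)
  simp only [PiLp.inner_apply, RCLike.inner_apply, σ.apply_eq_iff_eq] at h
  simp [mul_apply, ← h, one_apply, mul_comm]

lemma star_mul_mul_eq_reindex_of_orthonormal [Fintype ι] (σ : n ≃ ι)
    {e : ι → EuclideanSpace 𝕜 n} (he : Orthonormal 𝕜 e) {A : Matrix n n 𝕜} {K : Matrix ι ι 𝕜}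
    (hA : ∀ p, toEuclideanLin A (e p) = ∑ q, K q p • e q) :
    star (of fun r s => e (σ s) r) * A * of (fun r s => e (σ s) r) = reindex σ.symm σ.symm K := by
  set U : Matrix n n 𝕜 := of fun r s => e (σ s) r
  have hAU : A * U = U * reindex σ.symm σ.symm K := by
    ext r s
    have h := congrArg (· r) (hA (σ s))
    simp only [toLpLin_apply, PiLp.toLp_apply, WithLp.ofLp_sum, WithLp.ofLp_smul, mulVec,
      dotProduct, Finset.sum_apply, Pi.smul_apply, smul_eq_mul] at h
    simp only [mul_apply, U, of_apply, reindex_apply, submatrix_apply, Equiv.symm_symm]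
    rw [Equiv.sum_comp σ (fun q => e q r * K q (σ s)), h]
    exact Finset.sum_congr rfl fun _ _ => mul_comm _ _
  rw [mul_assoc, hAU, ← mul_assoc, (mem_unitaryGroup_iff'.mp
    (mem_unitaryGroup_of_orthonormal σ he)), one_mul]

end Matrix

/-- Borel–Friedman–Morgan's Proposition 4.2.1 for `K = U(n)`: if `ζ` has exact order
`m`, `n = h·m`, and `a, b ∈ U(n)` satisfy `a b a⁻¹ b⁻¹ = ζ·Iₙ`, then the pair `(a,b)`
is conjugate in `U(n)` to a pair `(d₁ ⊗ P, d₂ ⊗ Q)` where `d₁, d₂ ∈ U(h)` are diagonal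
and `(P,Q)` is a pair in `U(m)` with commutator `ζ·Iₘ` whose centralizer in `U(m)`
consists exactly of the unitary scalar matrices. -/
theorem unitary_pair_conjugate_to_kronecker
    (m h : ℕ) (ζ : ℂ) (hζ : IsPrimitiveRoot ζ m)
    (a b : Matrix.unitaryGroup (Fin (h * m)) ℂ)
    (hab : ((a * b * a⁻¹ * b⁻¹ : Matrix.unitaryGroup (Fin (h * m)) ℂ) :
        Matrix (Fin (h * m)) (Fin (h * m)) ℂ)
        = ζ • (1 : Matrix (Fin (h * m)) (Fin (h * m)) ℂ)) :
    ∃ (u : Matrix.unitaryGroup (Fin (h * m)) ℂ)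
      (d₁ d₂ : Matrix.unitaryGroup (Fin h) ℂ)
      (P Q : Matrix.unitaryGroup (Fin m) ℂ),
      (d₁ : Matrix (Fin h) (Fin h) ℂ).IsDiag ∧
      (d₂ : Matrix (Fin h) (Fin h) ℂ).IsDiag ∧
      ((P * Q * P⁻¹ * Q⁻¹ : Matrix.unitaryGroup (Fin m) ℂ) : Matrix (Fin m) (Fin m) ℂ)
        = ζ • (1 : Matrix (Fin m) (Fin m) ℂ) ∧
      (∀ g : Matrix.unitaryGroup (Fin m) ℂ,
        (g * P = P * g ∧ g * Q = Q * g) ↔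
        ∃ ω : ℂ, (g : Matrix (Fin m) (Fin m) ℂ) = ω • (1 : Matrix (Fin m) (Fin m) ℂ)) ∧
      ((u * a * u⁻¹ : Matrix.unitaryGroup (Fin (h * m)) ℂ) :
          Matrix (Fin (h * m)) (Fin (h * m)) ℂ)
        = Matrix.reindex finProdFinEquiv finProdFinEquiv
            ((d₁ : Matrix (Fin h) (Fin h) ℂ) ⊗ₖ (P : Matrix (Fin m) (Fin m) ℂ)) ∧
      ((u * b * u⁻¹ : Matrix.unitaryGroup (Fin (h * m)) ℂ) :
          Matrix (Fin (h * m)) (Fin (h * m)) ℂ)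
        = Matrix.reindex finProdFinEquiv finProdFinEquiv
            ((d₂ : Matrix (Fin h) (Fin h) ℂ) ⊗ₖ (Q : Matrix (Fin m) (Fin m) ℂ)) := by
  rcases eq_or_ne m 0 with rfl | hm
  · have : IsEmpty (Fin (h * 0)) := by rw [Nat.mul_zero]; infer_instance
    exact ⟨1, 1, 1, 1, 1, isDiag_one, isDiag_one, Subsingleton.elim _ _,
        fun _ => ⟨fun _ => ⟨0, Subsingleton.elim _ _⟩,
          fun _ => ⟨Subsingleton.elim _ _, Subsingleton.elim _ _⟩⟩,
        Subsingleton.elim _ _, Subsingleton.elim _ _⟩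
  have : NeZero m := ⟨hm⟩
  have hT := inner_toEuclideanLin_toEuclideanLin a.2
  have hS := inner_toEuclideanLin_toEuclideanLin b.2
  obtain ⟨e, μ, β, he⟩ := exists_isClockShiftFamily hζ finrank_euclideanSpace_fin hT hS
    (toEuclideanLin_mul_eq_smul (Unitary.coe_commutator_eq_smul_one_iff.mp hab))
  let σ := (finProdFinEquiv (m := h) (n := m)).symm
  let c : unitaryGroup (Fin (h * m)) ℂ := ⟨_, mem_unitaryGroup_of_orthonormal σ he.orthonormal⟩
  refine ⟨c⁻¹, ⟨diagonal μ, diagonal_mem_unitaryGroup_s10 (he.norm_μ_eq_one hT)⟩,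
    ⟨diagonal β, diagonal_mem_unitaryGroup_s10 (he.norm_β_eq_one hS)⟩,
    ⟨clock m ζ, clock_mem_unitaryGroup (hζ.norm'_eq_one hm)⟩, ⟨shift m, shift_mem_unitaryGroup⟩,
    isDiag_diagonal _, isDiag_diagonal _,
    Unitary.coe_commutator_eq_smul_one_iff.mpr (clock_mul_shift hζ.pow_eq_one),
    fun g => ?_, ?_, ?_⟩
  · simpa only [Subtype.ext_iff, MulMemClass.coe_mul] using commute_clock_shift_iff hζ
  · rw [Unitary.coe_inv_mul_mul_inv_inv]
    exact star_mul_mul_eq_reindex_of_orthonormal σ he.orthonormal fun p => by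
      rw [sum_diagonal_kronecker_clock_smul, he.T_apply]
  · rw [Unitary.coe_inv_mul_mul_inv_inv]
    exact star_mul_mul_eq_reindex_of_orthonormal σ he.orthonormal fun p => by
      rw [sum_diagonal_kronecker_shift_smul, he.S_apply]
end
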